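/- arXiv:0812.4091 — 7 statements merged into one kernel-verified Lean document; each statement's English description precedes it below -/
import Mathlib

section
/- For every integer n ≥ 2, the number of paths in CH′(n) (paths in CH(n) whose last step is D₁) equals the number of 3-Motzkin paths of length n−2. -/
/-- Steps of a path in `CH(n)`: `U = (1,1)`, labeled down steps `D1, D2` (each `(1,-1)`)
and labeled horizontal steps `H0, H1, H2` (each `(1,0)`). -/
inductive CStep : Type
  | U : CStep
  | D1 : CStep
  | D2 : CStep
  | H0 : CStep
  | H1 : CStep
  | H2 : CStep
  deriving DecidableEq

/-- The contribution of a step to the y-coordinate. -/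
def CStep.eff : CStep → ℤ
  | U => 1
  | D1 => -1
  | D2 => -1
  | H0 => 0
  | H1 => 0
  | H2 => 0

/-- The height (y-coordinate of the starting point) of the `i`-th step (0-indexed). -/
def cHeight (L : List CStep) (i : ℕ) : ℤ := ((L.take i).map CStep.eff).sum

/-- `L` is a path in `CH(n)`: it has `n` steps, ends at height `0`, never goes below
the x-axis, every step `H_ℓ` or `D_ℓ` has height at least `ℓ`, and every step `H2` or `D2`
is not the first step and is immediately preceded by a step in `{U, H1, H2}`. -/
def IsCH (L : List CStep) (n : ℕ) : Prop :=
  L.length = n ∧ (L.map CStep.eff).sum = 0 ∧ (∀ i, 0 ≤ cHeight L i) ∧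
  (∀ i, L[i]? = some CStep.D1 → 1 ≤ cHeight L i) ∧
  (∀ i, L[i]? = some CStep.D2 → 2 ≤ cHeight L i) ∧
  (∀ i, L[i]? = some CStep.H1 → 1 ≤ cHeight L i) ∧
  (∀ i, L[i]? = some CStep.H2 → 2 ≤ cHeight L i) ∧
  (∀ i, (L[i]? = some CStep.H2 ∨ L[i]? = some CStep.D2) →
    1 ≤ i ∧ (L[i-1]? = some CStep.U ∨ L[i-1]? = some CStep.H1 ∨ L[i-1]? = some CStep.H2))

/-- Steps of a 3-Motzkin path: `U = (1,1)`, `D = (1,-1)` and three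
labeled horizontal steps `H0, H1, H2` (each equal to `(1,0)`). -/
inductive MStep : Type
  | U : MStep
  | D : MStep
  | H0 : MStep
  | H1 : MStep
  | H2 : MStep
  deriving DecidableEq

/-- The contribution of a step to the y-coordinate. -/
def MStep.eff : MStep → ℤ
  | U => 1
  | D => -1
  | H0 => 0
  | H1 => 0
  | H2 => 0

/-- The height (y-coordinate of the starting point) of the `i`-th step (0-indexed). -/
def mHeight (L : List MStep) (i : ℕ) : ℤ := ((L.take i).map MStep.eff).sum

/-- `L` is a 3-Motzkin path of length `n`: it has `n` steps, ends at height `0`,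
and never goes below the x-axis. -/
def IsMotzkin3 (L : List MStep) (n : ℕ) : Prop :=
  L.length = n ∧ (L.map MStep.eff).sum = 0 ∧ ∀ i, 0 ≤ mHeight L i

/-- The number of `H2` steps of `L` of positive height. -/
def posH2Steps (L : List MStep) : ℕ :=
  ((Finset.range L.length).filter
    (fun i => L[i]? = some MStep.H2 ∧ 0 < mHeight L i)).card

/-!
Both kinds of paths are the words accepted by a deterministic automaton with a dead state: for
3-Motzkin paths the state is the height, for `CH` paths it is the height together with a flag
recording whether the previous step is `U`, `H₁` or `H₂`, as condition (ii) requires. Deleting the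
final `D₁` identifies `CH′(n)` with the `CH`-words of length `n - 1` from height `0` to height `1`.
Splitting words by their first letter gives linear recursions for both counts, and induction on the
length shows that the number of such `CH`-words of length `n + 1` from height `h` with the flag off
is `M(n, h-2) + 2 M(n, h-1) + M(n, h)`, where `M(n, k)` counts 3-Motzkin words of length `n` from
height `k` down to `0` (with the flag on and `h ≥ 2` it is `2 M(n, h-2) + 3 M(n, h-1) + M(n, h)`).
At `h = 0` the negative heights contribute nothing and the count is `M(n, 0)`.
-/

section WordCount

variable {α σ : Type*} (step : σ → α → σ) (accept : σ → Prop)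

noncomputable def wordCount (n : ℕ) (s : σ) : ℕ :=
  Nat.card {L : List α // L.length = n ∧ accept (L.foldl step s)}

theorem wordCount_zero [DecidablePred accept] (s : σ) :
    wordCount step accept 0 s = if accept s then 1 else 0 := by
  have : Subsingleton {L : List α // L.length = 0 ∧ accept (L.foldl step s)} :=
    ⟨fun ⟨L, hL, _⟩ ⟨L', hL', _⟩ => by
      simp only [List.length_eq_zero_iff] at hL hL'; subst hL hL'; rfl⟩
  split_ifs with h
  · have : Nonempty {L : List α // L.length = 0 ∧ accept (L.foldl step s)} := ⟨⟨[], rfl, h⟩⟩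
    exact Nat.card_unique
  · have : IsEmpty {L : List α // L.length = 0 ∧ accept (L.foldl step s)} :=
      ⟨fun ⟨L, hL, hacc⟩ => h (by simp_all)⟩
    exact Nat.card_of_isEmpty

theorem wordCount_succ [Fintype α] (n : ℕ) (s : σ) :
    wordCount step accept (n + 1) s = ∑ a, wordCount step accept n (step s a) := by
  have hfin (t : σ) : Finite {L : List α // L.length = n ∧ accept (L.foldl step t)} :=
    ((List.finite_length_eq α n).subset fun _ hL => hL.1).to_subtype
  simp only [wordCount]
  rw [← Nat.card_sigma]
  refine Nat.card_congr
    { toFun := fun L => ⟨L.1.head (List.ne_nil_of_length_eq_add_one L.2.1), L.1.tail, ?_, ?_⟩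
      invFun := fun L => ⟨L.1 :: L.2.1, by simp [L.2.2.1], L.2.2.2⟩
      left_inv := fun L => by simp
      right_inv := fun L => rfl }
  · simp [L.2.1]
  · obtain ⟨_ | ⟨a, t⟩, hlen, hacc⟩ := L
    · simp at hlen
    · exact hacc

theorem wordCount_eq_zero_of_trap {d : σ} (hd : ∀ a, step d a = d) (hacc : ¬ accept d) (n : ℕ) :
    wordCount step accept n d = 0 :=
  have : IsEmpty {L : List α // L.length = n ∧ accept (L.foldl step d)} :=
    ⟨fun L => hacc (List.foldl_fixed' hd L.1 ▸ L.2.2)⟩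
  Nat.card_of_isEmpty

end WordCount

theorem List.foldl_add_eq_add_sum {α M : Type*} [AddMonoid M] (f : α → M) (m : M) (L : List α) :
    L.foldl (fun b a => b + f a) m = m + (L.map f).sum := by
  induction L generalizing m with
  | nil => simp
  | cons a L ih => simp [ih, add_assoc]

theorem List.forall_take_iff_forall_lt {α : Type*} {L : List α} {P : List α → Prop} (hL : P L) :
    (∀ i, P (L.take i)) ↔ ∀ i < L.length, P (L.take i) :=
  ⟨fun h i _ => h i, fun h i => by
    rcases lt_or_ge i L.length with hi | hi
    · exact h i hi
    · rwa [List.take_of_length_le hi]⟩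

theorem card_subtype_and_getLast?_eq_some {α : Type*} (P : List α → Prop) (a : α) :
    Nat.card {L : List α // P L ∧ L.getLast? = some a} = Nat.card {L : List α // P (L ++ [a])} :=
  Nat.card_congr
    { toFun := fun L => ⟨L.1.dropLast, by
        obtain ⟨L', hL'⟩ := List.getLast?_eq_some_iff.mp L.2.2
        simpa [hL'] using L.2.1⟩
      invFun := fun L => ⟨L.1 ++ [a], L.2, List.getLast?_concat⟩
      left_inv := fun L => by
        obtain ⟨L', hL'⟩ := List.getLast?_eq_some_iff.mp L.2.2
        ext1; simp [hL']
      right_inv := fun L => by simp }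

section Guarded

variable {α σ : Type*} (valid : σ → α → Bool) (next : σ → α → σ)

def guardedStep : Option σ → α → Option σ
  | none, _ => none
  | some s, a => if valid s a then some (next s a) else none

theorem foldl_guardedStep_eq_some {L : List α} {s t : σ} :
    L.foldl (guardedStep valid next) (some s) = some t ↔
      (∀ i (hi : i < L.length), valid ((L.take i).foldl next s) L[i] = true) ∧ L.foldl next s = t := by
  induction L generalizing s with
  | nil => simp
  | cons a L ih =>
    simp only [List.foldl_cons, guardedStep, List.length_cons, Nat.forall_lt_succ_left']
    split_ifs with h
    · simp [ih, h]
    · simp [List.foldl_fixed' (fun _ => rfl : ∀ a, guardedStep valid next none a = none), h]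

theorem wordCount_guardedStep_none {accept : Option σ → Prop} (hacc : ¬ accept none) (n : ℕ) :
    wordCount (guardedStep valid next) accept n none = 0 :=
  wordCount_eq_zero_of_trap _ _ (fun _ => rfl) hacc n

theorem wordCount_guardedStep_succ [Fintype α] (accept : Option σ → Prop) (hacc : ¬ accept none)
    (n : ℕ) (s : σ) :
    wordCount (guardedStep valid next) accept (n + 1) (some s) =
      ∑ a, if valid s a then wordCount (guardedStep valid next) accept n (some (next s a)) else 0 := by
  rw [wordCount_succ]
  refine Finset.sum_congr rfl fun a _ => ?_
  rw [guardedStep]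
  split_ifs
  · rfl
  · exact wordCount_guardedStep_none valid next hacc n

end Guarded

instance : Fintype MStep :=
  ⟨⟨{.U, .D, .H0, .H1, .H2}, by decide⟩, fun a => by cases a <;> decide⟩

instance : Fintype CStep :=
  ⟨⟨{.U, .D1, .D2, .H0, .H1, .H2}, by decide⟩, fun a => by cases a <;> decide⟩

theorem MStep.sum_univ {M : Type*} [AddCommMonoid M] (f : MStep → M) :
    ∑ a, f a = f .U + (f .D + (f .H0 + (f .H1 + f .H2))) := by
  simp [Finset.sum, Finset.univ, Fintype.elems]

theorem CStep.sum_univ {M : Type*} [AddCommMonoid M] (f : CStep → M) :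
    ∑ a, f a = f .U + (f .D1 + (f .D2 + (f .H0 + (f .H1 + f .H2)))) := by
  simp [Finset.sum, Finset.univ, Fintype.elems]

def motzkinStep : Option ℤ → MStep → Option ℤ :=
  guardedStep (fun h _ => decide (0 ≤ h)) (fun h a => h + a.eff)

noncomputable def motzkinCount (n : ℕ) (h : ℤ) : ℕ :=
  wordCount motzkinStep (· = some 0) n (some h)

theorem isMotzkin3_iff (L : List MStep) (n : ℕ) :
    IsMotzkin3 L n ↔ L.length = n ∧ L.foldl motzkinStep (some 0) = some 0 := by
  have hHeight (i : ℕ) : (L.take i).foldl (fun h a => h + a.eff) 0 = mHeight L i := by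
    rw [List.foldl_add_eq_add_sum, zero_add, mHeight]
  have hsum : L.foldl (fun h a => h + a.eff) 0 = (L.map MStep.eff).sum := by
    rw [List.foldl_add_eq_add_sum, zero_add]
  simp only [IsMotzkin3, motzkinStep, foldl_guardedStep_eq_some, hHeight, hsum, decide_eq_true_eq]
  refine and_congr_right fun _ => ⟨fun ⟨h0, hpos⟩ => ⟨fun i _ => hpos i, h0⟩, fun ⟨hpos, h0⟩ => ⟨h0, ?_⟩⟩
  exact (List.forall_take_iff_forall_lt (P := fun l => 0 ≤ (l.map MStep.eff).sum) h0.ge).mpr hpos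

theorem motzkinCount_zero (h : ℤ) : motzkinCount 0 h = if h = 0 then 1 else 0 := by
  simp [motzkinCount, wordCount_zero]

theorem motzkinCount_of_neg {h : ℤ} (hh : h < 0) (n : ℕ) : motzkinCount n h = 0 := by
  cases n with
  | zero => simp [motzkinCount_zero, hh.ne]
  | succ n => simp [motzkinCount, motzkinStep, wordCount_guardedStep_succ, hh.not_ge]

theorem motzkinCount_succ_eq_sum {h : ℤ} (hh : 0 ≤ h) (n : ℕ) :
    motzkinCount (n + 1) h = ∑ a, motzkinCount n (h + MStep.eff a) := by
  rw [motzkinCount, motzkinStep, wordCount_guardedStep_succ _ _ _ (by simp)]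
  exact Finset.sum_congr rfl fun _ _ => if_pos (decide_eq_true hh)

theorem motzkinCount_succ {h : ℤ} (hh : 0 ≤ h) (n : ℕ) :
    motzkinCount (n + 1) h = motzkinCount n (h + 1) + motzkinCount n (h - 1) + 3 * motzkinCount n h := by
  rw [motzkinCount_succ_eq_sum hh, MStep.sum_univ]
  simp only [MStep.eff]
  ring_nf

def CStep.allowsLabelTwo : CStep → Bool
  | .U | .H1 | .H2 => true
  | .D1 | .D2 | .H0 => false

theorem CStep.allowsLabelTwo_iff (a : CStep) :
    a.allowsLabelTwo = true ↔ a = .U ∨ a = .H1 ∨ a = .H2 := by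
  cases a <;> simp [CStep.allowsLabelTwo]

/- A state `(h, b)` is the current height and whether the previous step is `U`, `H₁` or `H₂`;
`chValid` encodes conditions (i) and (ii). -/
def chValid : ℤ × Bool → CStep → Bool
  | (h, _), .U | (h, _), .H0 => decide (0 ≤ h)
  | (h, _), .D1 | (h, _), .H1 => decide (1 ≤ h)
  | (h, b), .D2 | (h, b), .H2 => decide (2 ≤ h) && b

def chNext (p : ℤ × Bool) (a : CStep) : ℤ × Bool :=
  (p.1 + a.eff, a.allowsLabelTwo)

def chStep : Option (ℤ × Bool) → CStep → Option (ℤ × Bool) :=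
  guardedStep chValid chNext

theorem foldl_chNext (L : List CStep) (p : ℤ × Bool) :
    L.foldl chNext p = (p.1 + (L.map CStep.eff).sum, L.getLast?.elim p.2 CStep.allowsLabelTwo) := by
  induction L generalizing p with
  | nil => simp
  | cons a L ih =>
    rw [List.foldl_cons, ih, chNext, List.getLast?_cons]
    cases L.getLast? <;> simp [add_assoc]

theorem getLast?_take_elim_allowsLabelTwo {L : List CStep} {i : ℕ} (hi : i < L.length) :
    (L.take i).getLast?.elim false CStep.allowsLabelTwo = true ↔
      1 ≤ i ∧ (L[i-1]? = some .U ∨ L[i-1]? = some .H1 ∨ L[i-1]? = some .H2) := by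
  rcases Nat.eq_zero_or_pos i with rfl | hpos
  · simp
  · rw [List.getLast?_take, if_neg hpos.ne', List.getElem?_eq_getElem (by omega)]
    simp [CStep.allowsLabelTwo_iff, Nat.one_le_iff_ne_zero.mpr hpos.ne']

theorem isCH_iff_forall_chValid (L : List CStep) (n : ℕ) :
    IsCH L n ↔ L.length = n ∧ (L.map CStep.eff).sum = 0 ∧ ∀ i (hi : i < L.length),
      chValid (cHeight L i, (L.take i).getLast?.elim false CStep.allowsLabelTwo) L[i] = true := by
  simp only [IsCH, ← forall_and]
  refine and_congr_right fun _ => and_congr_right fun hsum => ?_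
  have hpointwise (i : ℕ) (hi : i < L.length) :
      (0 ≤ cHeight L i ∧
        (L[i]? = some CStep.D1 → 1 ≤ cHeight L i) ∧
        (L[i]? = some CStep.D2 → 2 ≤ cHeight L i) ∧
        (L[i]? = some CStep.H1 → 1 ≤ cHeight L i) ∧
        (L[i]? = some CStep.H2 → 2 ≤ cHeight L i) ∧
        (L[i]? = some CStep.H2 ∨ L[i]? = some CStep.D2 → 1 ≤ i ∧
          (L[i-1]? = some CStep.U ∨ L[i-1]? = some CStep.H1 ∨ L[i-1]? = some CStep.H2))) ↔
      chValid (cHeight L i, (L.take i).getLast?.elim false CStep.allowsLabelTwo) L[i] = true := by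
    rw [List.getElem?_eq_getElem hi, ← getLast?_take_elim_allowsLabelTwo hi]
    generalize L[i] = a
    cases a <;> simp [chValid] <;> omega
  refine ⟨fun h i hi => (hpointwise i hi).mp (h i), fun h i => ?_⟩
  rcases lt_or_ge i L.length with hi | hi
  · exact (hpointwise i hi).mpr (h i hi)
  · simp [List.getElem?_eq_none hi, cHeight, List.take_of_length_le hi, hsum]

theorem isCH_iff (L : List CStep) (n : ℕ) :
    IsCH L n ↔ L.length = n ∧ (L.foldl chStep (some (0, false))).map Prod.fst = some 0 := by
  rw [isCH_iff_forall_chValid, Option.map_eq_some_iff]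
  simp [chStep, foldl_guardedStep_eq_some, foldl_chNext, cHeight, and_comm]

theorem map_fst_chStep_D1 (o : Option (ℤ × Bool)) :
    (chStep o .D1).map Prod.fst = some 0 ↔ o.map Prod.fst = some 1 := by
  rcases o with _ | ⟨h, b⟩
  · simp [chStep, guardedStep]
  · simp only [chStep, guardedStep, chValid, chNext, CStep.eff]
    split_ifs <;> simp <;> omega

theorem isCH_append_D1_iff (L : List CStep) (n : ℕ) :
    IsCH (L ++ [.D1]) (n + 1) ↔
      L.length = n ∧ (L.foldl chStep (some (0, false))).map Prod.fst = some 1 := by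
  rw [isCH_iff, List.foldl_append, List.foldl_cons, List.foldl_nil, map_fst_chStep_D1]
  simp

/- Counts `CH`-words from the state `(h, b)` that end at height `1`, i.e. just before the final
`D₁` of a path in `CH′`. -/
noncomputable def chCount (n : ℕ) (h : ℤ) (b : Bool) : ℕ :=
  wordCount chStep (fun o => o.map Prod.fst = some 1) n (some (h, b))

theorem chCount_zero (h : ℤ) (b : Bool) : chCount 0 h b = if h = 1 then 1 else 0 := by
  simp only [chCount, wordCount_zero, Option.map_some, Option.some.injEq]

theorem chCount_succ_eq_sum (n : ℕ) (h : ℤ) (b : Bool) :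
    chCount (n + 1) h b =
      ∑ a, if chValid (h, b) a then chCount n (h + a.eff) a.allowsLabelTwo else 0 := by
  rw [chCount, chStep, wordCount_guardedStep_succ _ _ _ (by simp)]
  rfl

theorem chCount_succ {h : ℤ} (hh : 0 ≤ h) (n : ℕ) (b : Bool) :
    chCount (n + 1) h b = chCount n (h + 1) true
      + (if 1 ≤ h then chCount n (h - 1) false + chCount n h true else 0)
      + (if 2 ≤ h ∧ b = true then chCount n (h - 1) false + chCount n h true else 0)
      + chCount n h false := by
  rw [chCount_succ_eq_sum, CStep.sum_univ]
  simp only [chValid, CStep.eff, CStep.allowsLabelTwo, ← sub_eq_add_neg, add_zero, Bool.and_eq_true,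
    decide_eq_true_eq, if_pos hh]
  split_ifs <;> omega

theorem chCount_flag_of_lt_two {h : ℤ} (hh : h < 2) (n : ℕ) (b : Bool) :
    chCount n h b = chCount n h false := by
  cases n with
  | zero => simp [chCount_zero]
  | succ n =>
    rw [chCount_succ_eq_sum, chCount_succ_eq_sum]
    refine Finset.sum_congr rfl fun a _ => ?_
    cases a <;> simp [chValid, show ¬ 2 ≤ h by omega]

theorem chCount_succ_closed_form (n : ℕ) :
    (∀ h, 0 ≤ h → chCount (n + 1) h false =
      motzkinCount n (h - 2) + 2 * motzkinCount n (h - 1) + motzkinCount n h) ∧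
    (∀ h, 2 ≤ h → chCount (n + 1) h true =
      2 * motzkinCount n (h - 2) + 3 * motzkinCount n (h - 1) + motzkinCount n h) := by
  induction n with
  | zero =>
    constructor <;> intro h hh <;> rw [chCount_succ (by omega)] <;>
      simp only [chCount_zero, motzkinCount_zero, Bool.false_eq_true, and_false, and_true,
        if_false] <;> split_ifs <;> omega
  | succ n ih =>
    obtain ⟨hF, hT⟩ := ih
    have hT1 : chCount (n + 1) 1 true = chCount (n + 1) 1 false :=
      chCount_flag_of_lt_two (by norm_num) _ _
    have hM (k : ℤ) : motzkinCount (n + 1) k =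
        if 0 ≤ k then motzkinCount n (k + 1) + motzkinCount n (k - 1) + 3 * motzkinCount n k
        else 0 := by
      split_ifs with hk
      · exact motzkinCount_succ hk n
      · exact motzkinCount_of_neg (by omega) _
    have hM0 (k : ℤ) (hk : k < 0) : motzkinCount n k = 0 := motzkinCount_of_neg hk n
    refine ⟨fun h hh => ?_, fun h hh => ?_⟩
    · rcases (by omega : h = 0 ∨ h = 1 ∨ 2 ≤ h) with rfl | rfl | h2
      · rw [chCount_succ le_rfl]
        norm_num [hT1, hF, hM, hM0]
        ring
      · rw [chCount_succ zero_le_one]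
        norm_num [hT1, hF, hT, hM, hM0]
        ring
      · rw [chCount_succ hh, hT (h + 1) (by omega), hF (h - 1) (by omega), hT h h2, hF h hh]
        simp only [hM, hh, show 0 ≤ h - 2 by omega, show 0 ≤ h - 1 by omega, show 1 ≤ h by omega,
          Bool.false_eq_true, and_false, if_true, if_false]
        ring_nf
    · rw [chCount_succ (by omega), hT (h + 1) (by omega), hF (h - 1) (by omega), hT h hh,
        hF h (by omega)]
      simp only [hM, hh, show 0 ≤ h by omega, show 0 ≤ h - 2 by omega, show 0 ≤ h - 1 by omega,
        show 1 ≤ h by omega, and_true, if_true]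
      ring_nf

theorem chCount_succ_zero_false (n : ℕ) : chCount (n + 1) 0 false = motzkinCount n 0 := by
  rw [(chCount_succ_closed_form n).1 0 le_rfl, motzkinCount_of_neg (by norm_num),
    motzkinCount_of_neg (by norm_num)]
  simp

/-- For every integer `n ≥ 2`, the number of paths in `CH'(n)` (paths in `CH(n)` whose
last step is `D1`) equals the number of 3-Motzkin paths of length `n - 2`. -/
theorem stmt0 (n : ℕ) (hn : 2 ≤ n) :
    Nat.card {L : List CStep // IsCH L n ∧ L.getLast? = some CStep.D1} =
    Nat.card {L : List MStep // IsMotzkin3 L (n - 2)} := by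
  obtain ⟨m, rfl⟩ : ∃ m, n = m + 2 := ⟨n - 2, by omega⟩
  calc Nat.card {L : List CStep // IsCH L (m + 2) ∧ L.getLast? = some CStep.D1}
      = Nat.card {L : List CStep // IsCH (L ++ [CStep.D1]) (m + 1 + 1)} :=
        card_subtype_and_getLast?_eq_some _ _
    _ = chCount (m + 1) 0 false :=
        Nat.card_congr (Equiv.subtypeEquivRight fun L => isCH_append_D1_iff L (m + 1))
    _ = motzkinCount m 0 := chCount_succ_zero_false m
    _ = Nat.card {L : List MStep // IsMotzkin3 L (m + 2 - 2)} :=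
        Nat.card_congr (Equiv.subtypeEquivRight fun L => (isMotzkin3_iff L m).symm)
end

section
/- For every integer n ≥ 1, the number of Schröder paths of length 2n having no peak of odd height equals the number of UH-free Schröder paths of length 2n whose first step is U. -/
/-- Steps of a Schröder path: `U = (1,1)`, `D = (1,-1)`, `H = H² = (2,0)`. -/
inductive SStep : Type
  | U : SStep
  | D : SStep
  | H : SStep
  deriving DecidableEq

/-- The contribution of a step to the x-coordinate. -/
def SStep.len : SStep → ℕ
  | U => 1
  | D => 1
  | H => 2

/-- The contribution of a step to the y-coordinate. -/
def SStep.eff : SStep → ℤ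
  | U => 1
  | D => -1
  | H => 0

/-- The height (y-coordinate of the starting point) of the `i`-th step (0-indexed);
for `i = L.length` this is the final height of the path. -/
def sHeight (L : List SStep) (i : ℕ) : ℤ := ((L.take i).map SStep.eff).sum

/-- `L` is a Schröder path of length `2 * n`: it has total horizontal displacement `2 * n`,
ends at height `0`, and never goes below the x-axis. -/
def IsSchroder (L : List SStep) (n : ℕ) : Prop :=
  (L.map SStep.len).sum = 2 * n ∧ (L.map SStep.eff).sum = 0 ∧ ∀ i, 0 ≤ sHeight L i

/-- A peak at position `i`: an up step immediately followed by a down step.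
The height of this peak is `sHeight L (i+1)`, the height of its down step. -/
def IsPeakAt (L : List SStep) (i : ℕ) : Prop :=
  L[i]? = some SStep.U ∧ L[i+1]? = some SStep.D

/-- `L` has no peak of odd height. -/
def NoOddPeak (L : List SStep) : Prop :=
  ∀ i, IsPeakAt L i → ¬ Odd (sHeight L (i+1))

/-- `L` has no peak of even height. -/
def NoEvenPeak (L : List SStep) : Prop :=
  ∀ i, IsPeakAt L i → ¬ Even (sHeight L (i+1))

/-- `L` is UH-free: no up step is immediately followed by a horizontal step. -/
def UHFree (L : List SStep) : Prop :=
  ∀ i, ¬ (L[i]? = some SStep.U ∧ L[i+1]? = some SStep.H)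

/-- The number of peaks of `L` of even height greater than `2`. -/
def evenHighPeaks (L : List SStep) : ℕ :=
  ((Finset.range L.length).filter
    (fun i => L[i]? = some SStep.U ∧ L[i+1]? = some SStep.D ∧
      Even (sHeight L (i+1)) ∧ 2 < sHeight L (i+1))).card

/-! Every nonempty Schröder path is either `H :: L` or `U :: (a ++ D :: b)` with `a`, `b`
Schröder paths (first return decomposition). Lifting `a` by one swaps the parity of its peaks,
and `U a D` has a peak of height `1` exactly when `a` is empty; `U a D` contains a UH-pair exactly
when `a` does or `a` starts with `H`. Writing `A n`, `E n`, `C n`, `B n` for the numbers of paths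
of semilength `n` with no odd peak, with no even peak, that are UH-free, and that are UH-free and
do not start with `H`, this gives
  `A (m+1) = ∑ E p * A q`,        `E (m+1) = E m + ∑ A p * E q`,
  `B (m+1) = ∑ B p * C q`,        `C (m+1) = C m + ∑ B p * C q`,
summing over `p + q = m`. Since all four counts are `1` at `n = 0`, induction gives `E = C`
and `A = B`; for `n ≥ 1`, not starting with `H` means starting with `U`. -/

open SStep

instance : Fintype SStep :=
  ⟨{U, D, H}, fun x => by cases x <;> simp⟩

lemma sHeight_cons_succ (x : SStep) (L : List SStep) (i : ℕ) :
    sHeight (x :: L) (i + 1) = x.eff + sHeight L i := by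
  simp [sHeight]

lemma sHeight_of_length_le {L : List SStep} {i : ℕ} (h : L.length ≤ i) :
    sHeight L i = (L.map eff).sum := by
  simp [sHeight, List.take_of_length_le h]

lemma sHeight_append_of_le (A B : List SStep) {i : ℕ} (h : i ≤ A.length) :
    sHeight (A ++ B) i = sHeight A i := by
  simp [sHeight, List.take_append, Nat.sub_eq_zero_of_le h]

lemma sHeight_append_length_add (A B : List SStep) (i : ℕ) :
    sHeight (A ++ B) (A.length + i) = (A.map eff).sum + sHeight B i := by
  simp [sHeight, List.take_append, List.take_of_length_le]

lemma sHeight_succ (L : List SStep) {i : ℕ} (hi : i < L.length) :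
    sHeight L (i + 1) = sHeight L i + L[i].eff := by
  simp only [sHeight, List.take_add_one, List.getElem?_eq_getElem hi, List.map_append,
    List.sum_append]
  simp

lemma length_le_sum_len (L : List SStep) : L.length ≤ (L.map len).sum := by
  induction L with
  | nil => simp
  | cons x L ih => cases x <;> simp [len] <;> omega

lemma two_dvd_sum_len_of_sum_eff_eq_zero {L : List SStep} (h : (L.map eff).sum = 0) :
    2 ∣ (L.map len).sum := by
  have key : ∀ M : List SStep, ((M.map len).sum : ℤ) ≡ (M.map eff).sum [ZMOD 2] := by
    intro M
    induction M with
    | nil => rfl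
    | cons x M ih =>
      simp only [List.map_cons, List.sum_cons, Nat.cast_add]
      refine Int.ModEq.add ?_ ih
      cases x <;> decide
  have := key L
  rw [h, Int.ModEq] at this
  omega

lemma exists_isSchroder {L : List SStep} (h0 : (L.map eff).sum = 0)
    (hnonneg : ∀ i, 0 ≤ sHeight L i) : ∃ n, IsSchroder L n := by
  obtain ⟨n, hn⟩ := two_dvd_sum_len_of_sum_eff_eq_zero h0
  exact ⟨n, hn, h0, hnonneg⟩

lemma IsSchroder.length_le {L : List SStep} {n : ℕ} (h : IsSchroder L n) : L.length ≤ 2 * n :=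
  h.1 ▸ length_le_sum_len L

instance (n : ℕ) (P : List SStep → Prop) : Finite {L : List SStep // IsSchroder L n ∧ P L} :=
  ((List.finite_length_le SStep (2 * n)).subset fun _ hL => IsSchroder.length_le hL.1).to_subtype

lemma isSchroder_nil_iff {n : ℕ} : IsSchroder [] n ↔ n = 0 := by
  simp [IsSchroder, sHeight]

lemma not_isSchroder_D_cons (L : List SStep) (n : ℕ) : ¬ IsSchroder (D :: L) n := fun h => by
  simpa [sHeight_cons_succ, sHeight, eff] using h.2.2 1

lemma isSchroder_H_cons_iff {L : List SStep} {n : ℕ} :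
    IsSchroder (H :: L) (n + 1) ↔ IsSchroder L n := by
  have hheight : ∀ i, sHeight (H :: L) (i + 1) = sHeight L i := fun i => by
    simp [sHeight_cons_succ, eff]
  refine ⟨fun ⟨hlen, hsum, hnonneg⟩ => ⟨?_, ?_, fun i => hheight i ▸ hnonneg (i + 1)⟩,
    fun ⟨hlen, hsum, hnonneg⟩ => ⟨?_, ?_, ?_⟩⟩
  · simp [len] at hlen; omega
  · simpa [eff] using hsum
  · simp [len, hlen]; ring
  · simpa [eff] using hsum
  · rintro (_ | i)
    · simp [sHeight]
    · exact hheight i ▸ hnonneg i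

lemma IsSchroder.getLast?_ne_U {L : List SStep} {n : ℕ} (h : IsSchroder L n) :
    L.getLast? ≠ some U := by
  intro hlast
  obtain ⟨L', rfl⟩ := List.getLast?_eq_some_iff.1 hlast
  have hsum := h.2.1
  have hL' := h.2.2 L'.length
  rw [sHeight_append_of_le _ _ le_rfl, sHeight_of_length_le le_rfl] at hL'
  simp [eff] at hsum
  omega

lemma IsSchroder.U_cons_append_D_cons {a b : List SStep} {p q : ℕ} (ha : IsSchroder a p)
    (hb : IsSchroder b q) : IsSchroder (U :: (a ++ D :: b)) (p + q + 1) := by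
  obtain ⟨hlen_a, hsum_a, hnonneg_a⟩ := ha
  obtain ⟨hlen_b, hsum_b, hnonneg_b⟩ := hb
  refine ⟨by simp [len, hlen_a, hlen_b]; ring, by simp [eff, hsum_a, hsum_b], ?_⟩
  rintro (_ | i)
  · simp [sHeight]
  rw [sHeight_cons_succ]
  rcases le_or_gt i a.length with hi | hi
  · rw [sHeight_append_of_le _ _ hi]
    simp only [eff]
    linarith [hnonneg_a i]
  · obtain ⟨j, rfl⟩ : ∃ j, i = a.length + (j + 1) := ⟨i - a.length - 1, by omega⟩
    rw [sHeight_append_length_add, sHeight_cons_succ, hsum_a]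
    simp [eff, hnonneg_b j]

-- `M` is split at the first time it reaches height `-1`.
lemma exists_eq_append_D_cons {M : List SStep} (hge : ∀ i, -1 ≤ sHeight M i)
    (hsum : (M.map eff).sum = -1) :
    ∃ a b, M = a ++ D :: b ∧ (a.map eff).sum = 0 ∧ ∀ i, 0 ≤ sHeight a i := by
  have hM_ne : M ≠ [] := by rintro rfl; simp at hsum
  have hex : ∃ k, sHeight M (k + 1) = -1 :=
    ⟨M.length - 1, by
      rw [Nat.sub_add_cancel (List.length_pos_iff.2 hM_ne), sHeight_of_length_le le_rfl, hsum]⟩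
  set k := Nat.find hex
  have hk : sHeight M (k + 1) = -1 := Nat.find_spec hex
  have hbefore : ∀ j ≤ k, 0 ≤ sHeight M j := by
    rintro (_ | j) hj
    · simp [sHeight]
    · have := Nat.find_min hex (show j < k by omega)
      have := hge (j + 1)
      omega
  have hk_lt : k < M.length := by
    by_contra! hle
    have := hbefore k le_rfl
    rw [sHeight_of_length_le hle] at this
    omega
  have hstep := sHeight_succ M hk_lt
  have hk_zero : sHeight M k = 0 ∧ M[k] = D := by
    have := hbefore k le_rfl
    cases hMk : M[k] <;> simp only [hMk, eff, reduceCtorEq, and_true, and_false] at hstep ⊢ <;> omega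
  have hM : M = M.take k ++ D :: M.drop (k + 1) := by
    rw [← hk_zero.2, ← List.drop_eq_getElem_cons hk_lt, List.take_append_drop]
  set a := M.take k
  have ha_len : a.length = k := List.length_take_of_le hk_lt.le
  have ha_sum : (a.map eff).sum = 0 := by
    rw [← sHeight_of_length_le le_rfl, ← sHeight_append_of_le a _ le_rfl, ← hM, ha_len, hk_zero.1]
  refine ⟨a, _, hM, ha_sum, fun i => ?_⟩
  rcases le_or_gt i a.length with hi | hi
  · rw [← sHeight_append_of_le a _ hi, ← hM]
    exact hbefore i (ha_len ▸ hi)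
  · rw [sHeight_of_length_le hi.le, ha_sum]

lemma exists_of_isSchroder_U_cons {M : List SStep} {n : ℕ} (h : IsSchroder (U :: M) n) :
    ∃ a b p q, M = a ++ D :: b ∧ IsSchroder a p ∧ IsSchroder b q ∧ p + q + 1 = n := by
  obtain ⟨hlen, hsum, hnonneg⟩ := h
  have hsum_M : (M.map eff).sum = -1 := by simp [eff] at hsum; omega
  have hge : ∀ i, -1 ≤ sHeight M i := fun i => by
    have := hnonneg (i + 1)
    simp [sHeight_cons_succ, eff] at this
    omega
  obtain ⟨a, b, rfl, ha_sum, ha_nonneg⟩ := exists_eq_append_D_cons hge hsum_M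
  have hb_height : ∀ j, sHeight b j = 1 + sHeight (a ++ D :: b) (a.length + (j + 1)) := fun j => by
    rw [sHeight_append_length_add, sHeight_cons_succ, ha_sum]
    simp [eff]
  have hb_sum : (b.map eff).sum = 0 := by
    simp [ha_sum, eff] at hsum_M
    omega
  obtain ⟨p, hp⟩ := exists_isSchroder ha_sum ha_nonneg
  obtain ⟨q, hq⟩ := exists_isSchroder hb_sum fun j => by
    linarith [hb_height j, hge (a.length + (j + 1))]
  refine ⟨a, b, p, q, rfl, hp, hq, ?_⟩
  simp [len, hp.1, hq.1] at hlen
  omega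

lemma length_le_of_append_D_cons_eq {a b a' b' : List SStep} (ha : (a.map eff).sum = 0)
    (ha' : ∀ i, 0 ≤ sHeight a' i) (h : a ++ D :: b = a' ++ D :: b') : a'.length ≤ a.length := by
  by_contra! hlt
  have := ha' (a.length + 1)
  rw [← sHeight_append_of_le a' (D :: b') (i := a.length + 1) hlt, ← h, sHeight_append_length_add,
    sHeight_cons_succ, ha] at this
  simp [eff, sHeight] at this

lemma append_D_cons_inj {a b a' b' : List SStep} {p p' : ℕ} (ha : IsSchroder a p)
    (ha' : IsSchroder a' p') (h : a ++ D :: b = a' ++ D :: b') : a = a' ∧ b = b' := by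
  have hlen := le_antisymm (length_le_of_append_D_cons_eq ha'.2.1 ha.2.2 h.symm)
    (length_le_of_append_D_cons_eq ha.2.1 ha'.2.2 h)
  obtain ⟨rfl, hb⟩ := List.append_inj h hlen
  exact ⟨rfl, List.cons_injective hb⟩

def ForallUBefore (s : SStep) (Q : ℤ → Prop) (L : List SStep) : Prop :=
  ∀ i, L[i]? = some U → L[i + 1]? = some s → Q (sHeight L (i + 1))

lemma noOddPeak_iff (L : List SStep) : NoOddPeak L ↔ ForallUBefore D (¬ Odd ·) L :=
  forall_congr' fun _ => and_imp

lemma noEvenPeak_iff (L : List SStep) : NoEvenPeak L ↔ ForallUBefore D (¬ Even ·) L :=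
  forall_congr' fun _ => and_imp

lemma uhFree_iff (L : List SStep) : UHFree L ↔ ForallUBefore H (fun _ => False) L :=
  forall_congr' fun _ => not_and

section ForallUBefore

variable {s : SStep} {Q : ℤ → Prop}

lemma forallUBefore_nil : ForallUBefore s Q [] := by
  simp [ForallUBefore]

lemma forallUBefore_cons {x : SStep} {L : List SStep} :
    ForallUBefore s Q (x :: L) ↔
      (x = U → L[0]? = some s → Q x.eff) ∧ ForallUBefore s (fun h => Q (x.eff + h)) L := by
  constructor
  · intro h
    refine ⟨fun hx hL => ?_, fun j h₁ h₂ => ?_⟩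
    · simpa [sHeight_cons_succ, sHeight] using h 0 (by simp [hx]) (by simpa using hL)
    · simpa [sHeight_cons_succ] using h (j + 1) (by simpa using h₁) (by simpa using h₂)
  · rintro ⟨h₀, h⟩ (_ | j) h₁ h₂
    · simp only [List.getElem?_cons_zero, Option.some.injEq, zero_add,
        List.getElem?_cons_succ] at h₁ h₂
      simpa [sHeight_cons_succ, sHeight] using h₀ h₁ h₂
    · simpa [sHeight_cons_succ] using h j (by simpa using h₁) (by simpa using h₂)

lemma forallUBefore_append {A M : List SStep} (hA : A.getLast? ≠ some U) :
    ForallUBefore s Q (A ++ M) ↔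
      ForallUBefore s Q A ∧ ForallUBefore s (fun h => Q ((A.map eff).sum + h)) M := by
  induction A generalizing Q with
  | nil => simp [forallUBefore_nil]
  | cons x A ih =>
    rw [List.cons_append, forallUBefore_cons, forallUBefore_cons]
    rcases A with _ | ⟨y, A⟩
    · have hx : x ≠ U := by simpa using hA
      simp [hx, forallUBefore_nil]
    · rw [ih (by simpa using hA)]
      simp [add_assoc, and_assoc]

end ForallUBefore

lemma noOddPeak_nil : NoOddPeak [] := by simp [noOddPeak_iff, forallUBefore_nil]

lemma noEvenPeak_nil : NoEvenPeak [] := by simp [noEvenPeak_iff, forallUBefore_nil]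

lemma uhFree_nil : UHFree [] := by simp [uhFree_iff, forallUBefore_nil]

lemma forallUBefore_U_cons_append_D_cons {s : SStep} {Q : ℤ → Prop} {a b : List SStep} {p : ℕ}
    (ha : IsSchroder a p) :
    ForallUBefore s Q (U :: (a ++ D :: b)) ↔
      ((a ++ D :: b)[0]? = some s → Q 1) ∧ ForallUBefore s (fun h => Q (1 + h)) a ∧
        ForallUBefore s Q b := by
  rw [forallUBefore_cons, forallUBefore_append ha.getLast?_ne_U, forallUBefore_cons, ha.2.1]
  simp [eff]

lemma noOddPeak_U_cons_append_D_cons {a b : List SStep} {p : ℕ} (ha : IsSchroder a p) :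
    NoOddPeak (U :: (a ++ D :: b)) ↔ (a ≠ [] ∧ NoEvenPeak a) ∧ NoOddPeak b := by
  rw [noOddPeak_iff, forallUBefore_U_cons_append_D_cons ha, noEvenPeak_iff, noOddPeak_iff]
  rcases a with _ | ⟨x, a⟩
  · simp
  · have hx : x ≠ D := by rintro rfl; exact not_isSchroder_D_cons a p ha
    simp [hx, parity_simps]

lemma noEvenPeak_U_cons_append_D_cons {a b : List SStep} {p : ℕ} (ha : IsSchroder a p) :
    NoEvenPeak (U :: (a ++ D :: b)) ↔ NoOddPeak a ∧ NoEvenPeak b := by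
  rw [noEvenPeak_iff, forallUBefore_U_cons_append_D_cons ha, noEvenPeak_iff, noOddPeak_iff]
  simp [parity_simps]

lemma uhFree_U_cons_append_D_cons {a b : List SStep} {p : ℕ} (ha : IsSchroder a p) :
    UHFree (U :: (a ++ D :: b)) ↔ (UHFree a ∧ a[0]? ≠ some H) ∧ UHFree b := by
  rw [uhFree_iff, forallUBefore_U_cons_append_D_cons ha, uhFree_iff, uhFree_iff]
  rcases a with _ | ⟨x, a⟩ <;> simp [and_comm, and_left_comm]

lemma noOddPeak_H_cons (L : List SStep) : NoOddPeak (H :: L) ↔ NoOddPeak L := by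
  simp [noOddPeak_iff, forallUBefore_cons, eff]

lemma noEvenPeak_H_cons (L : List SStep) : NoEvenPeak (H :: L) ↔ NoEvenPeak L := by
  simp [noEvenPeak_iff, forallUBefore_cons, eff]

lemma uhFree_H_cons (L : List SStep) : UHFree (H :: L) ↔ UHFree L := by
  simp [uhFree_iff, forallUBefore_cons]

open Finset

noncomputable def schroderCount (P : List SStep → Prop) (n : ℕ) : ℕ :=
  Nat.card {L : List SStep // IsSchroder L n ∧ P L}

theorem schroderCount_succ {P P' Q R : List SStep → Prop} (hH : ∀ L, P (H :: L) ↔ P' L)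
    (hU : ∀ a b p, IsSchroder a p → (P (U :: (a ++ D :: b)) ↔ Q a ∧ R b)) (m : ℕ) :
    schroderCount P (m + 1) = schroderCount P' m +
      ∑ pq ∈ antidiagonal m, schroderCount Q pq.1 * schroderCount R pq.2 := by
  let f : {L // IsSchroder L m ∧ P' L} ⊕ (Σ pq : antidiagonal m,
      {a // IsSchroder a pq.1.1 ∧ Q a} × {b // IsSchroder b pq.1.2 ∧ R b}) →
      {L // IsSchroder L (m + 1) ∧ P L} :=
    Sum.elim (fun L => ⟨H :: L.1, isSchroder_H_cons_iff.2 L.2.1, (hH _).2 L.2.2⟩)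
      fun x => ⟨U :: (x.2.1.1 ++ D :: x.2.2.1), by
        obtain ⟨⟨_, hpq⟩, ⟨_, ha, -⟩, ⟨_, hb, -⟩⟩ := x
        have := ha.U_cons_append_D_cons hb
        rwa [mem_antidiagonal.1 hpq] at this,
        (hU _ _ _ x.2.1.2.1).2 ⟨x.2.1.2.2, x.2.2.2.2⟩⟩
  have hinj : f.Injective := by
    rintro (⟨L, hL⟩ | ⟨⟨⟨p, q⟩, hpq⟩, ⟨a, ha⟩, ⟨b, hb⟩⟩)
      (⟨L', hL'⟩ | ⟨⟨⟨p', q'⟩, hpq'⟩, ⟨a', ha'⟩, ⟨b', hb'⟩⟩) h <;>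
      simp only [f, Sum.elim_inl, Sum.elim_inr, Subtype.mk.injEq, List.cons.injEq,
        reduceCtorEq, false_and, true_and] at h
    · simp [h]
    · obtain ⟨rfl, rfl⟩ := append_D_cons_inj ha.1 ha'.1 h
      obtain rfl : p = p' := by linarith [ha.1.1, ha'.1.1]
      obtain rfl : q = q' := by linarith [hb.1.1, hb'.1.1]
      rfl
  have hsurj : f.Surjective := by
    rintro ⟨_ | ⟨_ | _ | _, M⟩, hL, hP⟩
    · exact absurd (isSchroder_nil_iff.1 hL) m.succ_ne_zero
    · obtain ⟨a, b, p, q, rfl, ha, hb, hpq⟩ := exists_of_isSchroder_U_cons hL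
      have hab := (hU a b p ha).1 hP
      exact ⟨.inr ⟨⟨(p, q), mem_antidiagonal.2 (by omega)⟩, ⟨a, ha, hab.1⟩, ⟨b, hb, hab.2⟩⟩, rfl⟩
    · exact absurd hL (not_isSchroder_D_cons _ _)
    · exact ⟨.inl ⟨M, isSchroder_H_cons_iff.1 hL, (hH M).1 hP⟩, rfl⟩
  rw [schroderCount, ← Nat.card_congr (Equiv.ofBijective f ⟨hinj, hsurj⟩), Nat.card_sum,
    Nat.card_sigma]
  simp only [Nat.card_prod]
  exact congrArg (schroderCount P' m + ·)
    (sum_coe_sort (antidiagonal m) fun pq => schroderCount Q pq.1 * schroderCount R pq.2)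

lemma schroderCount_congr {P P' : List SStep → Prop} {n : ℕ}
    (h : ∀ L, IsSchroder L n → (P L ↔ P' L)) : schroderCount P n = schroderCount P' n :=
  Nat.card_congr (Equiv.subtypeEquivRight fun L => and_congr_right (h L))

lemma schroderCount_zero {P : List SStep → Prop} (hP : P []) : schroderCount P 0 = 1 := by
  rw [schroderCount, Nat.card_eq_one_iff_exists]
  refine ⟨⟨[], isSchroder_nil_iff.2 rfl, hP⟩, fun ⟨L, hL, _⟩ => ?_⟩
  simpa using hL.length_le

lemma schroderCount_eq_ne_nil_add {P : List SStep → Prop} (hP : P []) (n : ℕ) :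
    schroderCount P n = schroderCount (fun L => L ≠ [] ∧ P L) n + if n = 0 then 1 else 0 := by
  rcases n with _ | n
  · rw [schroderCount_zero hP, schroderCount, Nat.card_eq_zero.2 (.inl ⟨fun ⟨L, hL, hne, _⟩ =>
      hne (List.eq_nil_of_length_eq_zero (Nat.le_zero.1 hL.length_le))⟩)]
    rfl
  · refine (schroderCount_congr fun L hL => ?_).trans (add_zero _).symm
    exact ⟨fun h => ⟨by rintro rfl; exact n.succ_ne_zero (isSchroder_nil_iff.1 hL), h⟩, And.right⟩

lemma schroderCount_false (n : ℕ) : schroderCount (fun _ => False) n = 0 := by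
  simp [schroderCount]

lemma schroderCount_noOddPeak_succ (m : ℕ) :
    schroderCount NoOddPeak (m + 1) =
      ∑ pq ∈ antidiagonal m, schroderCount NoEvenPeak pq.1 * schroderCount NoOddPeak pq.2 := by
  rw [schroderCount_succ noOddPeak_H_cons fun _ _ _ ha => noOddPeak_U_cons_append_D_cons ha]
  -- the term counting `H :: L` is the missing `p = 0` term of the convolution, as `a ≠ []` fails
  -- only for the single path of length `0`
  simp only [schroderCount_eq_ne_nil_add (P := NoEvenPeak) noEvenPeak_nil, add_mul,
    sum_add_distrib]
  rw [add_comm]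
  congr 1
  rw [Nat.sum_antidiagonal_eq_sum_range_succ_mk]
  simp

lemma schroderCount_noEvenPeak_succ (m : ℕ) :
    schroderCount NoEvenPeak (m + 1) = schroderCount NoEvenPeak m +
      ∑ pq ∈ antidiagonal m, schroderCount NoOddPeak pq.1 * schroderCount NoEvenPeak pq.2 :=
  schroderCount_succ noEvenPeak_H_cons (fun _ _ _ ha => noEvenPeak_U_cons_append_D_cons ha) m

lemma schroderCount_uhFree_succ (m : ℕ) :
    schroderCount UHFree (m + 1) = schroderCount UHFree m +
      ∑ pq ∈ antidiagonal m, schroderCount (fun L => UHFree L ∧ L[0]? ≠ some H) pq.1 *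
        schroderCount UHFree pq.2 :=
  schroderCount_succ uhFree_H_cons (fun _ _ _ ha => uhFree_U_cons_append_D_cons ha) m

lemma schroderCount_uhFree_head?_ne_H_succ (m : ℕ) :
    schroderCount (fun L => UHFree L ∧ L[0]? ≠ some H) (m + 1) =
      ∑ pq ∈ antidiagonal m, schroderCount (fun L => UHFree L ∧ L[0]? ≠ some H) pq.1 *
        schroderCount UHFree pq.2 := by
  rw [schroderCount_succ (P' := fun _ => False) (Q := fun L => UHFree L ∧ L[0]? ≠ some H)
    (R := UHFree) (fun _ => by simp) (fun _ _ _ ha => by simp [uhFree_U_cons_append_D_cons ha]),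
    schroderCount_false, zero_add]

theorem schroderCount_noEvenPeak_eq_and_noOddPeak_eq (n : ℕ) :
    schroderCount NoEvenPeak n = schroderCount UHFree n ∧
      schroderCount NoOddPeak n = schroderCount (fun L => UHFree L ∧ L[0]? ≠ some H) n := by
  induction n using Nat.strong_induction_on with
  | _ n ih =>
  rcases n with _ | m
  · simp [schroderCount_zero, noEvenPeak_nil, uhFree_nil, noOddPeak_nil]
  have hlt : ∀ pq ∈ antidiagonal m, pq.1 < m + 1 ∧ pq.2 < m + 1 := fun pq h => by
    rw [HasAntidiagonal.mem_antidiagonal] at h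
    omega
  constructor
  · rw [schroderCount_noEvenPeak_succ, schroderCount_uhFree_succ, (ih m m.lt_succ_self).1]
    refine congrArg _ (sum_congr rfl fun pq h => ?_)
    rw [(ih _ (hlt pq h).1).2, (ih _ (hlt pq h).2).1]
  · rw [schroderCount_noOddPeak_succ, schroderCount_uhFree_head?_ne_H_succ,
      ← Nat.sum_antidiagonal_swap]
    refine sum_congr rfl fun pq h => ?_
    rw [Prod.fst_swap, Prod.snd_swap, (ih _ (hlt pq h).2).1, (ih _ (hlt pq h).1).2, mul_comm]

lemma IsSchroder.head?_ne_H_iff {L : List SStep} {n : ℕ} (hL : IsSchroder L n) (hn : n ≠ 0) :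
    L[0]? ≠ some H ↔ L[0]? = some U := by
  rcases L with _ | ⟨_ | _ | _, L⟩
  · exact absurd (isSchroder_nil_iff.1 hL) hn
  · simp
  · exact absurd hL (not_isSchroder_D_cons _ _)
  · simp

/-- For every integer `n ≥ 1`, the number of Schröder paths of length `2n` having no peak
of odd height equals the number of UH-free Schröder paths of length `2n` whose first
step is `U`. -/
theorem stmt2 (n : ℕ) (hn : 1 ≤ n) :
    Nat.card {L : List SStep // IsSchroder L n ∧ NoOddPeak L} =
    Nat.card {L : List SStep // IsSchroder L n ∧ UHFree L ∧ L[0]? = some SStep.U} :=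
  (schroderCount_noEvenPeak_eq_and_noOddPeak_eq n).2.trans <| schroderCount_congr fun _ hL =>
    and_congr_right' (hL.head?_ne_H_iff (Nat.one_le_iff_ne_zero.1 hn))
end

section
/- For every integer n ≥ 2, the number of Schröder paths of length 2(n−1) having no peak of odd height and no peak of even height greater than 2 (equivalently, all of whose peaks have height exactly 2) equals (1/2)·C(2n−2, n−1). -/
namespace Aux5

def N : ℕ → ℕ → Bool → ℕ
  | 0, h, _ => if h = 0 then 1 else 0
  | (l+1), h, s =>
      N l (h+1) (decide (h ≠ 1)) +
      ((if 1 ≤ h ∧ s = false then N l (h-1) false else 0) +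
       (if 1 ≤ l then N (l-1) h false else 0))

def paths : ℕ → ℕ → Bool → Finset (List SStep)
  | 0, h, _ => if h = 0 then {([] : List SStep)} else ∅
  | (l+1), h, s =>
      (paths l (h+1) (decide (h ≠ 1))).image (SStep.U :: ·) ∪
      ((if 1 ≤ h ∧ s = false then (paths l (h-1) false).image (SStep.D :: ·) else ∅) ∪
       (if 1 ≤ l then (paths (l-1) h false).image (SStep.H :: ·) else ∅))

lemma disj_img (a b : SStep) (hab : a ≠ b) (s t : Finset (List SStep)) :
    Disjoint (s.image (a :: ·)) (t.image (b :: ·)) := by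
  rw [Finset.disjoint_left]
  rintro L hL hL'
  simp only [Finset.mem_image] at hL hL'
  obtain ⟨x, -, rfl⟩ := hL
  obtain ⟨y, -, h⟩ := hL'
  exact hab (by injection h.symm)

lemma card_paths : ∀ l h s, (paths l h s).card = N l h s := by
  intro l
  induction l using Nat.strong_induction_on with
  | _ l ih =>
    match l with
    | 0 =>
      intro h s
      simp only [paths, N]
      split <;> simp
    | l+1 =>
      intro h s
      have d2 : ∀ (u v : Finset (List SStep)),
          Disjoint ((if 1 ≤ h ∧ s = false then u.image (SStep.D :: ·) else ∅))
            ((if 1 ≤ l then v.image (SStep.H :: ·) else ∅)) := by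
        intro u v
        split <;> split <;>
          simp [disj_img SStep.D SStep.H (by simp)]
      have d1 : ∀ (w u v : Finset (List SStep)),
          Disjoint (w.image (SStep.U :: ·))
            ((if 1 ≤ h ∧ s = false then u.image (SStep.D :: ·) else ∅) ∪
             (if 1 ≤ l then v.image (SStep.H :: ·) else ∅)) := by
        intro w u v
        rw [Finset.disjoint_union_right]
        constructor
        · split
          · exact disj_img SStep.U SStep.D (by simp) _ _
          · simp
        · split
          · exact disj_img SStep.U SStep.H (by simp) _ _
          · simp
      rw [paths, N, Finset.card_union_of_disjoint (d1 _ _ _),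
        Finset.card_union_of_disjoint (d2 _ _),
        Finset.card_image_of_injective _ (List.cons_injective)]
      congr 1
      · exact ih l (by omega) _ _
      congr 1
      · split <;>
          [rw [Finset.card_image_of_injective _ (List.cons_injective)]; skip] <;>
          simp [ih l (by omega)]
      · split <;>
          [rw [Finset.card_image_of_injective _ (List.cons_injective)]; skip] <;>
          simp [ih (l-1) (by omega)]

def Ok : ℕ → Bool → List SStep → Prop
  | h, _, [] => h = 0
  | h, _, (SStep.U :: L) => Ok (h+1) (decide (h ≠ 1)) L
  | h, s, (SStep.D :: L) => 1 ≤ h ∧ s = false ∧ Ok (h-1) false L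
  | h, _, (SStep.H :: L) => Ok h false L

lemma mem_paths : ∀ l h s (L : List SStep),
    L ∈ paths l h s ↔ ((L.map SStep.len).sum = l ∧ Ok h s L) := by
  intro l
  induction l using Nat.strong_induction_on with
  | _ l ih =>
    match l with
    | 0 =>
      intro h s L
      simp only [paths]
      constructor
      · intro hL
        split at hL <;> simp_all
        subst hL; simp [Ok, *]
      · rintro ⟨h1, h2⟩
        match L with
        | [] =>
          simp only [Ok] at h2; subst h2; simp
        | a :: L' =>
          exfalso
          simp only [List.map_cons, List.sum_cons] at h1
          cases a <;> simp [SStep.len] at h1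
    | l+1 =>
      intro h s L
      rw [paths]
      simp only [Finset.mem_union, Finset.mem_image]
      constructor
      · rintro (⟨x, hx, rfl⟩ | (hD | hH))
        · rw [ih l (by omega)] at hx
          refine ⟨by simp [SStep.len, hx.1]; omega, ?_⟩
          simpa [Ok] using hx.2
        · split at hD
          · simp only [Finset.mem_image] at hD
            obtain ⟨x, hx, rfl⟩ := hD
            rw [ih l (by omega)] at hx
            refine ⟨by simp [SStep.len, hx.1]; omega, ?_⟩
            simp only [Ok]
            exact ⟨by omega, by tauto, hx.2⟩
          · simp at hD
        · split at hH
          · simp only [Finset.mem_image] at hH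
            obtain ⟨x, hx, rfl⟩ := hH
            rw [ih (l-1) (by omega)] at hx
            refine ⟨by simp [SStep.len, hx.1]; omega, ?_⟩
            simpa [Ok] using hx.2
          · simp at hH
      · rintro ⟨h1, h2⟩
        match L with
        | [] => simp at h1
        | SStep.U :: L' =>
          left
          refine ⟨L', ?_, rfl⟩
          rw [ih l (by omega)]
          simp only [List.map_cons, List.sum_cons, SStep.len] at h1
          exact ⟨by omega, h2⟩
        | SStep.D :: L' =>
          right; left
          simp only [Ok] at h2
          rw [if_pos ⟨h2.1, h2.2.1⟩]
          simp only [Finset.mem_image]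
          refine ⟨L', ?_, rfl⟩
          rw [ih l (by omega)]
          simp only [List.map_cons, List.sum_cons, SStep.len] at h1
          exact ⟨by omega, h2.2.2⟩
        | SStep.H :: L' =>
          right; right
          simp only [List.map_cons, List.sum_cons, SStep.len] at h1
          rw [if_pos (by omega)]
          simp only [Finset.mem_image]
          refine ⟨L', ?_, rfl⟩
          rw [ih (l-1) (by omega)]
          exact ⟨by omega, h2⟩


lemma sHeight_zero (L : List SStep) : sHeight L 0 = 0 := by simp [sHeight]

lemma sHeight_nil (i : ℕ) : sHeight ([] : List SStep) i = 0 := by simp [sHeight]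

lemma sHeight_cons (a : SStep) (L : List SStep) (i : ℕ) :
    sHeight (a :: L) (i+1) = a.eff + sHeight L i := by
  simp [sHeight, List.take_succ_cons]

lemma isPeakAt_cons_succ (a : SStep) (L : List SStep) (i : ℕ) :
    IsPeakAt (a::L) (i+1) ↔ IsPeakAt L i := by
  simp [IsPeakAt]

lemma isPeakAt_cons_zero (a : SStep) (L : List SStep) :
    IsPeakAt (a::L) 0 ↔ (a = SStep.U ∧ L[0]? = some SStep.D) := by
  simp [IsPeakAt]

lemma getElem?_zero_eq_head? (L : List SStep) : L[0]? = L.head? := by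
  cases L <;> simp

lemma sHeight_succ_of_U (L : List SStep) (i : ℕ) (hU : L[i]? = some SStep.U) :
    sHeight L (i+1) = sHeight L i + 1 := by
  unfold sHeight
  rw [List.take_succ, hU]
  simp [SStep.eff]

def Spec (h : ℕ) (s : Bool) (L : List SStep) : Prop :=
  ((h : ℤ) + (L.map SStep.eff).sum = 0) ∧
  (∀ i, 0 ≤ (h : ℤ) + sHeight L i) ∧
  (∀ i, IsPeakAt L i → (h : ℤ) + sHeight L (i+1) = 2) ∧
  (s = true → L.head? ≠ some SStep.D)

lemma ok_iff_spec : ∀ (L : List SStep) (h : ℕ) (s : Bool), Ok h s L ↔ Spec h s L := by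
  intro L
  induction L with
  | nil =>
    intro h s
    show (h = 0) ↔ _
    unfold Spec
    simp [sHeight_nil, IsPeakAt]
  | cons a L ihL =>
    intro h s
    cases a
    case U =>
      show Ok (h+1) (decide (h ≠ 1)) L ↔ _
      rw [ihL]
      unfold Spec
      constructor
      · rintro ⟨hsum, hnn, hpk, hhd⟩
        refine ⟨?_, ?_, ?_, ?_⟩
        · simp only [List.map_cons, List.sum_cons, SStep.eff]
          push_cast at hsum ⊢; omega
        · intro i
          match i with
          | 0 => rw [sHeight_zero]; positivity
          | i+1 =>
            rw [sHeight_cons]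
            have := hnn i
            simp only [SStep.eff]
            push_cast at this ⊢; omega
        · intro i hp
          match i with
          | 0 =>
            rw [sHeight_cons, sHeight_zero]
            simp only [SStep.eff]
            rw [isPeakAt_cons_zero] at hp
            have hd : L.head? = some SStep.D := by
              rw [← getElem?_zero_eq_head?]; exact hp.2
            by_cases h1 : h = 1
            · subst h1; norm_num
            · exact absurd hd (hhd (by simp [h1]))
          | i+1 =>
            rw [isPeakAt_cons_succ] at hp
            have := hpk i hp
            rw [sHeight_cons]
            simp only [SStep.eff]
            push_cast at this ⊢; omega
        · intro _; simp
      · rintro ⟨hsum, hnn, hpk, hhd⟩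
        refine ⟨?_, ?_, ?_, ?_⟩
        · simp only [List.map_cons, List.sum_cons, SStep.eff] at hsum
          push_cast at hsum ⊢; omega
        · intro i
          have := hnn (i+1)
          rw [sHeight_cons] at this
          simp only [SStep.eff] at this
          push_cast at this ⊢; omega
        · intro i hp
          have := hpk (i+1) ((isPeakAt_cons_succ _ _ _).mpr hp)
          rw [sHeight_cons] at this
          simp only [SStep.eff] at this
          push_cast at this ⊢; omega
        · intro hdec hD
          have h1 : h ≠ 1 := by simpa using hdec
          have := hpk 0 (by
            rw [isPeakAt_cons_zero]
            exact ⟨rfl, by rw [getElem?_zero_eq_head?]; exact hD⟩)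
          rw [sHeight_cons, sHeight_zero] at this
          simp only [SStep.eff] at this
          omega
    case D =>
      show (1 ≤ h ∧ s = false ∧ Ok (h-1) false L) ↔ _
      unfold Spec
      constructor
      · rintro ⟨h1, hs, hok⟩
        rw [ihL] at hok
        obtain ⟨hsum, hnn, hpk, -⟩ := hok
        have hc : ((h - 1 : ℕ) : ℤ) = (h : ℤ) - 1 := by omega
        rw [hc] at hsum hnn hpk
        refine ⟨?_, ?_, ?_, ?_⟩
        · simp only [List.map_cons, List.sum_cons, SStep.eff]
          omega
        · intro i
          match i with
          | 0 => rw [sHeight_zero]; positivity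
          | i+1 =>
            rw [sHeight_cons]
            have := hnn i
            simp only [SStep.eff]
            omega
        · intro i hp
          match i with
          | 0 =>
            rw [isPeakAt_cons_zero] at hp
            exact absurd hp.1 (by simp)
          | i+1 =>
            rw [isPeakAt_cons_succ] at hp
            have := hpk i hp
            rw [sHeight_cons]
            simp only [SStep.eff]
            omega
        · intro hst
          rw [hst] at hs; exact absurd hs (by simp)
      · rintro ⟨hsum, hnn, hpk, hhd⟩
        have h1 : 1 ≤ h := by
          have := hnn 1
          rw [sHeight_cons, sHeight_zero] at this
          simp only [SStep.eff] at this
          omega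
        have hs : s = false := by
          cases s
          · rfl
          · exact absurd (by simp : (SStep.D :: L).head? = some SStep.D) (hhd rfl)
        refine ⟨h1, hs, ?_⟩
        rw [ihL]
        have hc : ((h - 1 : ℕ) : ℤ) = (h : ℤ) - 1 := by omega
        refine ⟨?_, ?_, ?_, ?_⟩
        · simp only [List.map_cons, List.sum_cons, SStep.eff] at hsum
          omega
        · intro i
          have := hnn (i+1)
          rw [sHeight_cons] at this
          simp only [SStep.eff] at this
          omega
        · intro i hp
          have := hpk (i+1) ((isPeakAt_cons_succ _ _ _).mpr hp)
          rw [sHeight_cons] at this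
          simp only [SStep.eff] at this
          omega
        · simp
    case H =>
      show Ok h false L ↔ _
      rw [ihL]
      unfold Spec
      constructor
      · rintro ⟨hsum, hnn, hpk, -⟩
        refine ⟨?_, ?_, ?_, ?_⟩
        · simp only [List.map_cons, List.sum_cons, SStep.eff]
          omega
        · intro i
          match i with
          | 0 => rw [sHeight_zero]; positivity
          | i+1 =>
            rw [sHeight_cons]
            have := hnn i
            simp only [SStep.eff]
            omega
        · intro i hp
          match i with
          | 0 =>
            rw [isPeakAt_cons_zero] at hp
            exact absurd hp.1 (by simp)
          | i+1 =>
            rw [isPeakAt_cons_succ] at hp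
            have := hpk i hp
            rw [sHeight_cons]
            simp only [SStep.eff]
            omega
        · simp
      · rintro ⟨hsum, hnn, hpk, -⟩
        refine ⟨?_, ?_, ?_, ?_⟩
        · simp only [List.map_cons, List.sum_cons, SStep.eff] at hsum
          omega
        · intro i
          have := hnn (i+1)
          rw [sHeight_cons] at this
          simp only [SStep.eff] at this
          omega
        · intro i hp
          have := hpk (i+1) ((isPeakAt_cons_succ _ _ _).mpr hp)
          rw [sHeight_cons] at this
          simp only [SStep.eff] at this
          omega
        · simp


def cf (l h : ℕ) : ℕ :=
  if h ≤ l ∧ l % 2 = h % 2 then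
    if h = 0 then (if l = 0 then 1 else (l-1).choose (l/2 - 1))
    else l.choose ((l-h)/2)
  else 0

lemma Id1 (l h : ℕ) (hh : h ≠ 1) :
    cf l (h+1) + (if 1 ≤ h then cf l (h-1) else 0) = cf (l+1) h := by
  unfold cf
  split_ifs <;> try omega
  all_goals try exact absurd (by assumption) not_false
  · -- Pascal, h ≥ 2, h+1 ≤ l
    rename_i hc1 _ _ _ _ _
    obtain ⟨t, rfl⟩ : ∃ t, l = h + 1 + 2 * t := ⟨(l - h - 1)/2, by omega⟩
    rw [show (h + 1 + 2*t - (h+1))/2 = t by omega,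
      show (h + 1 + 2*t - (h-1))/2 = t + 1 by omega,
      show (h + 1 + 2*t + 1 - h)/2 = t + 1 by omega,
      show h + 1 + 2*t + 1 = (h + 1 + 2*t) + 1 by ring]
    exact (Nat.choose_succ_succ _ _).symm
  · -- h = 0, l odd
    rw [show h = 0 by omega, show l + 1 - 1 = l by omega,
      show (l+1)/2 - 1 = (l-1)/2 by omega, add_zero]
  · -- h = l + 1 case
    rename_i hc1 _ hc2 _ _ _
    rw [show (l - (h-1))/2 = 0 by omega, show (l+1-h)/2 = 0 by omega]
    simp

lemma Id2 (l : ℕ) :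
    cf l 2 + (cf l 0 + (if 1 ≤ l then cf (l-1) 1 else 0)) = cf (l+1) 1 := by
  unfold cf
  split_ifs <;> try omega
  all_goals try exact absurd (by assumption) not_false
  · -- l even, l ≥ 2
    rename_i hc1 _ _ _ _ _ _
    obtain ⟨u, rfl⟩ : ∃ u, l = 2*u + 2 := ⟨l/2 - 1, by omega⟩
    rw [show (2*u + 2 - 2)/2 = u by omega,
      show 2*u + 2 - 1 = 2*u + 1 by omega,
      show (2*u + 2)/2 - 1 = u by omega,
      show (2*u + 1 - 1)/2 = u by omega,
      show (2*u + 2 + 1 - 1)/2 = u + 1 by omega,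
      show 2*u + 2 + 1 = (2*u + 2) + 1 by ring]
    have p1 : ((2*u+2)+1).choose (u+1) = (2*u+2).choose u + (2*u+2).choose (u+1) :=
      Nat.choose_succ_succ _ _
    have p2 : ((2*u+1)+1).choose (u+1) = (2*u+1).choose u + (2*u+1).choose (u+1) :=
      Nat.choose_succ_succ _ _
    have p2' : (2*u+2).choose (u+1) = (2*u+1).choose u + (2*u+1).choose (u+1) := p2
    have p3 : (2*u+1).choose (u+1) = (2*u+1).choose u := by
      have := Nat.choose_symm (n := 2*u+1) (k := u) (by omega)
      rw [show 2*u+1-u = u+1 by omega] at this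
      exact this
    omega
  · -- l = 0
    rename_i h0 _ _ _
    rw [show l = 0 by omega]
    simp


lemma N_true (l h : ℕ) :
    N (l+1) h true + (if 1 ≤ h then N l (h-1) false else 0) = N (l+1) h false := by
  simp only [N, Bool.true_eq_false, and_false, if_false, and_true]
  split_ifs <;> omega

lemma N_eq : ∀ l h, N l h false = cf l h := by
  intro l
  induction l using Nat.strong_induction_on with
  | _ l ih =>
    match l with
    | 0 =>
      intro h
      simp only [N, cf]
      split_ifs <;> omega
    | l+1 =>
      intro h
      by_cases hh : h = 1
      · subst hh
        rw [N, show (decide ((1:ℕ) ≠ 1)) = false by simp, ih l (by omega),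
          if_pos (by simp), ih l (by omega), ← Id2 l]
        congr 2
        split_ifs with hl
        · exact ih (l-1) (by omega) 1
        · rfl
      · rw [N, show (decide (h ≠ 1)) = true by simp [hh]]
        match l with
        | 0 =>
          have hN : N 0 (h+1) true = 0 := by
            simp only [N]; rw [if_neg (by omega)]
          rw [hN, if_neg (by omega : ¬ 1 ≤ 0), add_zero, zero_add]
          by_cases h1 : 1 ≤ h
          · rw [if_pos (by simp [h1])]
            have : N 0 (h-1) false = 0 := by
              simp only [N]; rw [if_neg (by omega)]
            rw [this]
            unfold cf
            rw [if_neg (by omega)]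
          · rw [if_neg (by simp [h1])]
            unfold cf
            rw [if_neg (by omega)]
        | l+1 =>
          have key := N_true l (h+1)
          rw [if_pos (by omega : 1 ≤ h + 1), show h + 1 - 1 = h by omega,
            ih l (by omega), ih (l+1) (by omega)] at key
          rw [if_pos (by omega : 1 ≤ l + 1), show l + 1 - 1 = l by omega,
            ih l (by omega)]
          have hid := Id1 (l+1) h hh
          have hifs : (if 1 ≤ h ∧ (false:Bool) = false then N (l+1) (h-1) false else 0)
              = (if 1 ≤ h then cf (l+1) (h-1) else 0) := by
            simp only [eq_self_iff_true, and_true]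
            split_ifs with h1
            · exact ih (l+1) (by omega) _
            · rfl
          rw [hifs, ← hid, ← key]
          ring



lemma spec_iff_main (L : List SStep) (m : ℕ) :
    (IsSchroder L m ∧ NoOddPeak L ∧
      ∀ i, IsPeakAt L i → ¬ (Even (sHeight L (i+1)) ∧ 2 < sHeight L (i+1)))
    ↔ ((L.map SStep.len).sum = 2 * m ∧ Spec 0 false L) := by
  constructor
  · rintro ⟨⟨hlen, hsum, hnn⟩, hodd, hhigh⟩
    refine ⟨hlen, by simpa using hsum, fun i => by simpa using hnn i, ?_, by simp⟩
    intro i hp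
    have hx : sHeight L (i+1) = sHeight L i + 1 := sHeight_succ_of_U L i hp.1
    have h1 : 0 ≤ sHeight L i := hnn i
    have he : Even (sHeight L (i+1)) := by
      have := hodd i hp
      rwa [Int.not_odd_iff_even] at this
    have h2 : ¬ (Even (sHeight L (i+1)) ∧ 2 < sHeight L (i+1)) := hhigh i hp
    have h3 : sHeight L (i+1) ≤ 2 := by
      by_contra hc
      exact h2 ⟨he, by omega⟩
    rw [Int.even_iff] at he
    push_cast
    omega
  · rintro ⟨hlen, hsum, hnn, hpk, -⟩
    have hs : (L.map SStep.eff).sum = 0 := by simpa using hsum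
    have hn : ∀ i, 0 ≤ sHeight L i := fun i => by simpa using hnn i
    refine ⟨⟨hlen, hs, hn⟩, ?_, ?_⟩
    · intro i hp hodd
      have := hpk i hp
      rw [Int.odd_iff] at hodd
      omega
    · intro i hp hc
      have := hpk i hp
      omega

end Aux5

/-- For every integer `n ≥ 2`, the number of Schröder paths of length `2 * (n - 1)` having
no peak of odd height and no peak of even height greater than `2` equals
`(1/2) * C(2n-2, n-1)`. -/
theorem stmt5 (n : ℕ) (hn : 2 ≤ n) :
    (Nat.card {L : List SStep // IsSchroder L (n - 1) ∧ NoOddPeak L ∧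
        ∀ i, IsPeakAt L i → ¬ (Even (sHeight L (i + 1)) ∧ 2 < sHeight L (i + 1))} : ℚ) =
    ((2 * n - 2).choose (n - 1) : ℚ) / 2 := by
  obtain ⟨k, rfl⟩ : ∃ k, n = k + 2 := ⟨n - 2, by omega⟩
  have hP : ∀ L : List SStep,
      (IsSchroder L (k + 2 - 1) ∧ NoOddPeak L ∧
        ∀ i, IsPeakAt L i → ¬ (Even (sHeight L (i + 1)) ∧ 2 < sHeight L (i + 1)))
      ↔ L ∈ Aux5.paths (2 * (k + 1)) 0 false := by
    intro L
    rw [Aux5.mem_paths (2 * (k + 1)) 0 false L,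
      show k + 2 - 1 = k + 1 by omega]
    exact (Aux5.spec_iff_main L (k+1)).trans
      (and_congr Iff.rfl (Aux5.ok_iff_spec L 0 false).symm)
  have hcard : Nat.card {L : List SStep // IsSchroder L (k + 2 - 1) ∧ NoOddPeak L ∧
        ∀ i, IsPeakAt L i → ¬ (Even (sHeight L (i + 1)) ∧ 2 < sHeight L (i + 1))}
      = (Aux5.paths (2 * (k + 1)) 0 false).card := by
    rw [Nat.card_congr (Equiv.subtypeEquivRight hP)]
    exact Nat.card_eq_finsetCard _
  have hcf : Aux5.cf (2 * (k + 1)) 0 = (2 * k + 1).choose k := by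
    unfold Aux5.cf
    rw [if_pos (by omega), if_pos rfl, if_neg (by omega)]
    congr 1 <;> omega
  have hbin : 2 * ((2 * k + 1).choose k) = (2 * (k + 1)).choose (k + 1) := by
    have p := Nat.choose_succ_succ (2 * k + 1) k
    simp only [Nat.succ_eq_add_one] at p
    have psymm : (2 * k + 1).choose (k + 1) = (2 * k + 1).choose k := by
      have := Nat.choose_symm (n := 2 * k + 1) (k := k) (by omega)
      rw [show 2 * k + 1 - k = k + 1 by omega] at this
      exact this
    rw [show 2 * (k + 1) = (2 * k + 1) + 1 by ring]
    omega
  rw [hcard, Aux5.card_paths, Aux5.N_eq, hcf,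
    show 2 * (k + 2) - 2 = 2 * (k + 1) by omega,
    show k + 2 - 1 = k + 1 by omega, ← hbin]
  push_cast
  ring
end

section
/- For every integer n ≥ 1, the number of Schröder paths of length 2n in which every horizontal step H² has height 1 equals the number of lattice paths from (0,0) to (n,n) using unit steps (1,0) and (0,1) whose first step is (1,0). -/
/-- Validity of the remaining path from height `h`: stays nonnegative, `H` only at
height `1`, ends at height `0`. -/
def s6Valid : List SStep → ℤ → Prop
  | [], h => h = 0
  | .U :: L, h => 0 ≤ h ∧ s6Valid L (h + 1)
  | .D :: L, h => 1 ≤ h ∧ s6Valid L (h - 1)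
  | .H :: L, h => h = 1 ∧ s6Valid L h

def s6phi : ℤ → Bool → List SStep → List Bool
  | _, _, [] => []
  | h, b, .U :: L => (!b) :: s6phi (h + 1) b L
  | h, b, .D :: L => b :: s6phi (h - 1) (if h = 1 then false else b) L
  | h, b, .H :: L => b :: false :: s6phi h true L

def s6psi : ℤ → Bool → List Bool → List SStep
  | _, true, [] => [.D]
  | _, false, [] => []
  | _, true, true :: p => .D :: .U :: s6psi 1 false p
  | _, true, false :: p => .H :: s6psi (-1) false p
  | h, false, true :: p =>
      if h = -1 then s6psi 0 true p
      else if h < -1 then .D :: s6psi (h + 1) false p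
      else .U :: s6psi (h + 1) false p
  | h, false, false :: p =>
      if h = 1 then s6psi 0 true p
      else if h ≤ 0 then .U :: s6psi (h - 1) false p
      else .D :: s6psi (h - 1) false p

def s6osum (p : List Bool) : ℤ := (p.map (fun c => if c then (1:ℤ) else -1)).sum

lemma s6osum_nil : s6osum [] = 0 := rfl

lemma s6osum_cons (c : Bool) (p : List Bool) :
    s6osum (c :: p) = (if c then (1:ℤ) else -1) + s6osum p := by
  simp [s6osum]

lemma s6phi_length : ∀ (L : List SStep) (h : ℤ) (b : Bool),
    (s6phi h b L).length = (L.map SStep.len).sum := by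
  intro L
  induction L with
  | nil => intro h b; simp [s6phi]
  | cons s L ih =>
    intro h b
    cases s <;> simp [s6phi, ih, SStep.len] <;> omega

lemma s6phi_osum : ∀ (L : List SStep) (h : ℤ) (b : Bool), s6Valid L h →
    s6osum (s6phi h b L) = if b then h else -h := by
  intro L
  induction L with
  | nil =>
    intro h b hv
    simp only [s6Valid] at hv
    subst hv
    simp [s6phi, s6osum]
  | cons s L ih =>
    intro h b hv
    cases s with
    | U =>
      obtain ⟨-, hv⟩ := hv
      have := ih (h + 1) b hv
      cases b <;> simp [s6phi, s6osum_cons, this] <;> omega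
    | D =>
      obtain ⟨h1, hv⟩ := hv
      by_cases he : h = 1
      · subst he
        have := ih 0 false (by simpa using hv)
        cases b <;> simp [s6phi, s6osum_cons, this] <;> omega
      · have := ih (h - 1) b hv
        cases b <;> simp [s6phi, s6osum_cons, he, this] <;> omega
    | H =>
      obtain ⟨he, hv⟩ := hv
      subst he
      have := ih 1 true hv
      cases b <;> simp [s6phi, s6osum_cons, this]

lemma s6count (p : List Bool) : 2 * (p.count true : ℤ) = p.length + s6osum p := by
  induction p with
  | nil => simp [s6osum]
  | cons c p ih =>
    cases c <;> simp [s6osum_cons, List.count_cons] at * <;> push_cast <;> omega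

lemma s6psi_length : ∀ (p : List Bool) (h : ℤ) (b : Bool),
    ((s6psi h b p).map SStep.len).sum = p.length + (if b then 1 else 0) := by
  intro p
  induction p with
  | nil =>
    intro h b
    cases b <;> simp [s6psi, SStep.len]
  | cons c p ih =>
    intro h b
    cases b <;> cases c <;>
      simp only [s6psi] <;> split_ifs <;>
      simp [ih, SStep.len, List.length_cons] <;>
      first | omega | simp_all

lemma sHeight_zero (L : List SStep) : sHeight L 0 = 0 := by simp [sHeight]

lemma sHeight_cons (s : SStep) (L : List SStep) (i : ℕ) :
    sHeight (s :: L) (i + 1) = s.eff + sHeight L i := by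
  simp [sHeight, List.take_succ_cons]

/-- The conditions appearing in the theorem, relative to a starting height `h`. -/
def s6Cond (L : List SStep) (h : ℤ) : Prop :=
  (L.map SStep.eff).sum + h = 0 ∧ (∀ i : ℕ, 0 ≤ h + sHeight L i) ∧
    ∀ i : ℕ, L[i]? = some SStep.H → h + sHeight L i = 1

lemma s6shift (P : ℕ → Prop) : (∀ i, P i) ↔ P 0 ∧ ∀ i, P (i + 1) :=
  ⟨fun h => ⟨h 0, fun i => h _⟩, fun h i => by
    cases i with
    | zero => exact h.1
    | succ j => exact h.2 j⟩

lemma s6cond_cons (s : SStep) (L : List SStep) (h : ℤ) :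
    s6Cond (s :: L) h ↔ 0 ≤ h ∧ (s = SStep.H → h = 1) ∧ s6Cond L (h + s.eff) := by
  unfold s6Cond
  rw [s6shift (fun i => 0 ≤ h + sHeight (s :: L) i),
      s6shift (fun i => (s :: L)[i]? = some SStep.H → h + sHeight (s :: L) i = 1)]
  simp only [sHeight_zero, sHeight_cons, List.getElem?_cons_zero, List.getElem?_cons_succ,
    List.map_cons, List.sum_cons, Option.some_inj, add_zero]
  constructor
  · rintro ⟨h1, ⟨h2, h3⟩, h4, h5⟩
    exact ⟨h2, h4, by omega, fun i => by have := h3 i; omega,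
      fun i hi => by have := h5 i hi; omega⟩
  · rintro ⟨h1, h2, h3, h4, h5⟩
    exact ⟨by omega, ⟨h1, fun i => by have := h4 i; omega⟩, h2,
      fun i hi => by have := h5 i hi; omega⟩

lemma s6cond_nonneg (L : List SStep) (h : ℤ) (hc : s6Cond L h) : 0 ≤ h := by
  have := hc.2.1 0
  rw [sHeight_zero] at this
  omega

lemma s6valid_iff : ∀ (L : List SStep) (h : ℤ), s6Valid L h ↔ s6Cond L h := by
  intro L
  induction L with
  | nil =>
    intro h
    unfold s6Valid s6Cond
    simp [sHeight]
    omega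
  | cons s L ih =>
    intro h
    rw [s6cond_cons]
    cases s with
    | U =>
      simp only [s6Valid, ih, SStep.eff]
      constructor
      · rintro ⟨h0, hv⟩
        exact ⟨h0, by simp, hv⟩
      · rintro ⟨h0, -, hc⟩
        exact ⟨h0, hc⟩
    | D =>
      have he : h + SStep.eff SStep.D = h - 1 := by simp [SStep.eff]; ring
      rw [he]
      simp only [s6Valid, ih]
      constructor
      · rintro ⟨h1, hv⟩
        exact ⟨by omega, by simp, hv⟩
      · rintro ⟨h0, -, hc⟩
        have h1 := s6cond_nonneg L (h - 1) hc
        exact ⟨by omega, hc⟩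
    | H =>
      have he : h + SStep.eff SStep.H = h := by simp [SStep.eff]
      rw [he]
      simp only [s6Valid, ih]
      constructor
      · rintro ⟨h1, hv⟩
        exact ⟨by omega, fun _ => h1, hv⟩
      · rintro ⟨h0, h2, hc⟩
        exact ⟨by simpa using h2, hc⟩

lemma s6_left : ∀ (L : List SStep),
    (s6Valid L 0 → s6psi 0 true (s6phi 0 false L) = SStep.D :: L) ∧
    (∀ (h : ℤ) (b : Bool), 1 ≤ h → s6Valid L h →
      s6psi (if b then -h else h) false (s6phi h b L) = L) := by
  intro L
  induction L with
  | nil =>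
    refine ⟨fun _ => by simp [s6phi, s6psi], fun h b h1 hv => ?_⟩
    simp only [s6Valid] at hv
    omega
  | cons s L ih =>
    constructor
    · intro hv
      cases s with
      | U =>
        obtain ⟨-, hv⟩ := hv
        have IH := ih.2 1 false (le_refl 1) (by simpa using hv)
        simp only [s6phi, Bool.not_false, s6psi]
        simp only [if_false, Bool.false_eq_true] at IH ⊢
        rw [show (0:ℤ) + 1 = 1 by ring]
        rw [IH]
      | D => exact absurd hv.1 (by omega)
      | H => exact absurd hv.1 (by omega)
    · intro h b h1 hv
      cases s with
      | U =>
        obtain ⟨-, hv⟩ := hv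
        cases b with
        | false =>
          have IH := ih.2 (h + 1) false (by omega) hv
          simp only [if_false, Bool.false_eq_true] at IH ⊢
          simp only [s6phi, Bool.not_false, s6psi]
          rw [if_neg (by omega), if_neg (by omega), IH]
        | true =>
          have IH := ih.2 (h + 1) true (by omega) hv
          simp only [if_true] at IH ⊢
          simp only [s6phi, Bool.not_true, s6psi]
          rw [if_neg (by omega), if_pos (by omega),
            show -h - 1 = -(h + 1) by ring, IH]
      | D =>
        obtain ⟨-, hv⟩ := hv
        by_cases he : h = 1
        · subst he
          have IH := ih.1 (by simpa using hv)
          cases b with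
          | false =>
            simp only [if_false, Bool.false_eq_true]
            simp only [s6phi, if_pos rfl, s6psi]
            norm_num [IH]
          | true =>
            simp only [if_true]
            simp only [s6phi, if_pos rfl, s6psi]
            norm_num [IH]
        · cases b with
          | false =>
            have IH := ih.2 (h - 1) false (by omega) hv
            simp only [if_false, Bool.false_eq_true] at IH ⊢
            simp only [s6phi, if_neg he, s6psi]
            rw [IH, if_neg (by omega : ¬h ≤ 0)]
          | true =>
            have IH := ih.2 (h - 1) true (by omega) hv
            simp only [if_true] at IH ⊢
            simp only [s6phi, if_neg he, s6psi]
            rw [if_neg (by omega), if_pos (by omega),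
              show -h + 1 = -(h - 1) by ring, IH]
      | H =>
        obtain ⟨he, hv⟩ := hv
        subst he
        have IH := ih.2 1 true (le_refl 1) hv
        simp only [if_true] at IH
        cases b with
        | false =>
          simp only [if_false, Bool.false_eq_true]
          simp only [s6phi, s6psi]
          norm_num [IH]
        | true =>
          simp only [if_true]
          simp only [s6phi, s6psi]
          norm_num [IH]

lemma s6_right : ∀ (p : List Bool),
    ((s6phi 1 false (s6psi 0 true p) = false :: p) ∧
     (s6phi 1 true (s6psi 0 true p) = true :: p)) ∧
    (∀ h : ℤ, 1 ≤ h →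
      s6phi h false (s6psi h false p) = p ∧ s6phi h true (s6psi (-h) false p) = p) := by
  intro p
  induction p with
  | nil =>
    refine ⟨⟨?_, ?_⟩, fun h h1 => ⟨?_, ?_⟩⟩ <;> norm_num [s6psi, s6phi]
  | cons c p ih =>
    constructor
    · cases c with
      | true =>
        constructor <;>
          (simp only [s6psi, s6phi]; norm_num [(ih.2 1 le_rfl).1])
      | false =>
        constructor <;>
          (simp only [s6psi, s6phi]; norm_num [(ih.2 1 le_rfl).2])
    · intro h h1
      cases c with
      | true =>
        constructor
        · simp only [s6psi]
          rw [if_neg (by omega : ¬h = -1), if_neg (by omega : ¬h < -1)]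
          simp only [s6phi, Bool.not_false]
          rw [(ih.2 (h + 1) (by omega)).1]
        · by_cases he : h = 1
          · subst he
            simp only [s6psi]
            norm_num [ih.1.2]
          · simp only [s6psi]
            rw [if_neg (by omega : ¬(-h) = -1), if_pos (by omega : -h < -1)]
            simp only [s6phi]
            rw [if_neg (by omega : ¬h = 1),
              show -h + 1 = -(h - 1) by ring, (ih.2 (h - 1) (by omega)).2]
      | false =>
        constructor
        · by_cases he : h = 1
          · subst he
            simp only [s6psi]
            norm_num [ih.1.1]
          · simp only [s6psi]
            rw [if_neg he, if_neg (by omega : ¬h ≤ 0)]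
            simp only [s6phi]
            rw [if_neg he, (ih.2 (h - 1) (by omega)).1]
        · simp only [s6psi]
          rw [if_neg (by omega : ¬(-h) = 1), if_pos (by omega : -h ≤ 0)]
          simp only [s6phi, Bool.not_true]
          rw [show -h - 1 = -(h + 1) by ring, (ih.2 (h + 1) (by omega)).2]

lemma s6_psi_valid : ∀ (p : List Bool),
    (s6osum p = 0 → s6Valid (s6psi 0 true p) 1) ∧
    (∀ h : ℤ, 1 ≤ h →
      (s6osum p = -h → s6Valid (s6psi h false p) h) ∧
      (s6osum p = h → s6Valid (s6psi (-h) false p) h)) := by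
  intro p
  induction p with
  | nil =>
    refine ⟨fun _ => ?_, fun h h1 => ⟨fun h0 => ?_, fun h0 => ?_⟩⟩
    · show s6Valid [SStep.D] 1
      exact ⟨le_rfl, by norm_num [s6Valid]⟩
    · rw [s6osum_nil] at h0; omega
    · rw [s6osum_nil] at h0; omega
  | cons c p ih =>
    constructor
    · intro h0
      rw [s6osum_cons] at h0
      cases c with
      | false =>
        simp only [s6psi]
        refine ⟨rfl, ?_⟩
        exact (ih.2 1 le_rfl).2 (by simp at h0; omega)
      | true =>
        simp only [s6psi]
        refine ⟨le_rfl, ?_, ?_⟩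
        · norm_num
        · rw [show (1:ℤ) - 1 + 1 = 1 by ring]
          exact (ih.2 1 le_rfl).1 (by simp at h0; omega)
    · intro h h1
      constructor
      · intro h0
        rw [s6osum_cons] at h0
        cases c with
        | false =>
          norm_num at h0
          by_cases he : h = 1
          · subst he
            simp only [s6psi]
            rw [if_pos trivial]
            exact ih.1 (by omega)
          · simp only [s6psi]
            rw [if_neg he, if_neg (by omega : ¬h ≤ 0)]
            refine ⟨by omega, ?_⟩
            exact (ih.2 (h - 1) (by omega)).1 (by omega)
        | true =>
          norm_num at h0
          simp only [s6psi]
          rw [if_neg (by omega : ¬h = -1), if_neg (by omega : ¬h < -1)]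
          refine ⟨by omega, ?_⟩
          exact (ih.2 (h + 1) (by omega)).1 (by omega)
      · intro h0
        rw [s6osum_cons] at h0
        cases c with
        | false =>
          norm_num at h0
          simp only [s6psi]
          rw [if_neg (by omega : ¬(-h) = 1), if_pos (by omega : -h ≤ 0)]
          refine ⟨by omega, ?_⟩
          rw [show -h - 1 = -(h + 1) by ring]
          exact (ih.2 (h + 1) (by omega)).2 (by omega)
        | true =>
          norm_num at h0
          by_cases he : h = 1
          · subst he
            simp only [s6psi]
            rw [if_pos trivial]
            exact ih.1 (by omega)
          · simp only [s6psi]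
            rw [if_neg (by omega : ¬(-h) = -1), if_pos (by omega : -h < -1)]
            refine ⟨by omega, ?_⟩
            rw [show -h + 1 = -(h - 1) by ring]
            exact (ih.2 (h - 1) (by omega)).2 (by omega)

lemma s6_forward (n : ℕ) (hn : 1 ≤ n) (L : List SStep) (hv : s6Valid L 0)
    (hl : (L.map SStep.len).sum = 2 * n) :
    (s6phi 0 false L).length = 2 * n ∧ (s6phi 0 false L).count true = n ∧
      (s6phi 0 false L)[0]? = some true := by
  have hlen : (s6phi 0 false L).length = 2 * n := by rw [s6phi_length]; exact hl
  have hos : s6osum (s6phi 0 false L) = 0 := by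
    have := s6phi_osum L 0 false hv
    simpa using this
  have hcount := s6count (s6phi 0 false L)
  refine ⟨hlen, by omega, ?_⟩
  cases L with
  | nil => simp at hl; omega
  | cons s L' =>
    cases s with
    | U => simp [s6phi]
    | D => exact absurd hv.1 (by omega)
    | H => exact absurd hv.1 (by omega)

lemma s6_backward (n : ℕ) (p : List Bool) (hl : p.length = 2 * n)
    (hc : p.count true = n) (hh : p[0]? = some true) :
    s6Valid (s6psi 0 false p) 0 ∧ ((s6psi 0 false p).map SStep.len).sum = 2 * n := by
  have hlen2 : ((s6psi 0 false p).map SStep.len).sum = 2 * n := by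
    rw [s6psi_length]; simp [hl]
  have hos : s6osum p = 0 := by
    have := s6count p; omega
  obtain ⟨p', rfl⟩ : ∃ p', p = true :: p' := by
    cases p with
    | nil => simp at hh
    | cons c p' =>
      simp at hh
      exact ⟨p', by rw [hh]⟩
  have hos' : s6osum p' = -1 := by
    rw [s6osum_cons] at hos; norm_num at hos; omega
  have hpsi : s6psi 0 false (true :: p') = SStep.U :: s6psi 1 false p' := by
    simp only [s6psi]
    rw [if_neg (by norm_num), if_neg (by norm_num)]
    norm_num
  rw [hpsi] at hlen2 ⊢
  refine ⟨⟨le_rfl, ?_⟩, hlen2⟩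
  rw [show (0:ℤ) + 1 = 1 by ring]
  exact ((s6_psi_valid p').2 1 le_rfl).1 hos'

lemma s6_li (L : List SStep) (hv : s6Valid L 0) :
    s6psi 0 false (s6phi 0 false L) = L := by
  cases L with
  | nil => simp [s6phi, s6psi]
  | cons s L' =>
    cases s with
    | U =>
      obtain ⟨-, hv⟩ := hv
      rw [show (0:ℤ) + 1 = 1 by ring] at hv
      have IH := (s6_left L').2 1 false le_rfl hv
      norm_num at IH
      simp only [s6phi, s6psi, Bool.not_false]
      rw [if_neg (by norm_num), if_neg (by norm_num)]
      norm_num [IH]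
    | D => exact absurd hv.1 (by omega)
    | H => exact absurd hv.1 (by omega)

lemma s6_ri (p : List Bool) (hh : p[0]? = some true) :
    s6phi 0 false (s6psi 0 false p) = p := by
  obtain ⟨p', rfl⟩ : ∃ p', p = true :: p' := by
    cases p with
    | nil => simp at hh
    | cons c p' =>
      simp at hh
      exact ⟨p', by rw [hh]⟩
  have hpsi : s6psi 0 false (true :: p') = SStep.U :: s6psi 1 false p' := by
    simp only [s6psi]
    rw [if_neg (by norm_num), if_neg (by norm_num)]
    norm_num
  rw [hpsi]
  have IH := ((s6_right p').2 1 le_rfl).1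
  simp only [s6phi, Bool.not_false]
  norm_num [IH]


/-- For every integer `n ≥ 1`, the number of Schröder paths of length `2n` in which every
horizontal step `H²` has height `1` equals the number of lattice paths from `(0,0)` to
`(n,n)` with unit steps `(1,0)` and `(0,1)` whose first step is `(1,0)`.  Such a lattice
path is encoded as a list of booleans of length `2n` (with `true` standing for the step
`(1,0)`), having exactly `n` entries `true`, and starting with `true`. -/
theorem stmt6 (n : ℕ) (hn : 1 ≤ n) :
    Nat.card {L : List SStep // IsSchroder L n ∧
        ∀ i, L[i]? = some SStep.H → sHeight L i = 1} =
    Nat.card {p : List Bool // p.length = 2 * n ∧ p.count true = n ∧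
        p[0]? = some true} := by
  have hchar : ∀ L : List SStep,
      (IsSchroder L n ∧ ∀ i, L[i]? = some SStep.H → sHeight L i = 1) ↔
      (s6Valid L 0 ∧ (L.map SStep.len).sum = 2 * n) := by
    intro L
    rw [s6valid_iff]
    unfold IsSchroder s6Cond
    constructor
    · rintro ⟨⟨hl, hs, hnn⟩, hH⟩
      exact ⟨⟨by omega, fun i => by simpa using hnn i, fun i hi => by simpa using hH i hi⟩, hl⟩
    · rintro ⟨⟨hs, hnn, hH⟩, hl⟩
      exact ⟨⟨hl, by omega, fun i => by simpa using hnn i⟩, fun i hi => by simpa using hH i hi⟩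
  refine Nat.card_congr
    { toFun := fun x => ⟨s6phi 0 false x.1, by
        obtain ⟨hv, hl⟩ := (hchar x.1).1 x.2
        exact s6_forward n hn x.1 hv hl⟩,
      invFun := fun y => ⟨s6psi 0 false y.1,
        (hchar _).2 (s6_backward n y.1 y.2.1 y.2.2.1 y.2.2.2)⟩,
      left_inv := fun x => Subtype.ext (s6_li x.1 ((hchar x.1).1 x.2).1),
      right_inv := fun y => Subtype.ext (s6_ri y.1 y.2.2.2) }
end

section
/- For every integer n ≥ 1, the number of Schröder paths of length 2n in which every horizontal step H² has height 1 equals the number of UH-free Schröder paths of length 2n whose first step is U and which have no horizontal step of height greater than 1. -/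
/-! Both families factor into arches on the x-axis. A path whose horizontal steps all have
height `1` is a sequence of arches `U H^a X D` with `a` maximal, where `X` never goes below its
starting height, ends there, has all its horizontal steps at that height, and does not begin
with one. Moving each run out of its arch, `U X D H^a`, gives exactly the UH-free paths
beginning with `U` whose horizontal steps have height at most `1`: the runs now lie on the
x-axis, and `U X D` contains no UH-pair because `X` neither begins with a horizontal step nor
has one above its base line.
First-return decomposition makes both factorisations unique, so both families are in bijection
with the lists of pairs `(a, X)` of the right total width. -/

namespace SchroderPath

open SStep List

def rise (L : List SStep) : ℤ := (L.map eff).sum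

def width (L : List SStep) : ℕ := (L.map len).sum

@[simp] lemma rise_nil : rise [] = 0 := rfl

@[simp] lemma rise_cons (s : SStep) (L : List SStep) : rise (s :: L) = eff s + rise L := by
  simp [rise]

@[simp] lemma rise_append (L₁ L₂ : List SStep) : rise (L₁ ++ L₂) = rise L₁ + rise L₂ := by
  simp [rise]

@[simp] lemma rise_replicate_H (a : ℕ) : rise (replicate a H) = 0 := by
  simp [rise, eff]

lemma sHeight_cons_succ (s : SStep) (L : List SStep) (i : ℕ) :
    sHeight (s :: L) (i + 1) = eff s + sHeight L i := by
  simp [sHeight]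

lemma sHeight_eq_rise_take (L : List SStep) (i : ℕ) : sHeight L i = rise (L.take i) := rfl

lemma sHeight_succ_of_getElem? {L : List SStep} {i : ℕ} {s : SStep} (h : L[i]? = some s) :
    sHeight L (i + 1) = sHeight L i + eff s := by
  simp [sHeight, take_add_one, h]

/-- The path `L`, started at height `h`, never goes below the x-axis. -/
def NonnegFrom (h : ℤ) (L : List SStep) : Prop := ∀ i, 0 ≤ h + sHeight L i

/-- Every horizontal step of `L`, started at height `h`, has a height satisfying `p`. -/
def HLevels (p : ℤ → Prop) (h : ℤ) (L : List SStep) : Prop :=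
  ∀ i, L[i]? = some H → p (h + sHeight L i)

@[simp] lemma nonnegFrom_nil {h : ℤ} : NonnegFrom h [] ↔ 0 ≤ h := by
  simp [NonnegFrom, sHeight]

@[simp] lemma nonnegFrom_cons {h : ℤ} {s : SStep} {L : List SStep} :
    NonnegFrom h (s :: L) ↔ 0 ≤ h ∧ NonnegFrom (h + eff s) L := by
  rw [NonnegFrom, NonnegFrom, ← Nat.and_forall_add_one]
  simp only [sHeight_cons_succ, add_assoc]
  simp [sHeight]

lemma NonnegFrom.nonneg {h : ℤ} {L : List SStep} (hL : NonnegFrom h L) : 0 ≤ h := by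
  simpa [sHeight] using hL 0

@[simp] lemma nonnegFrom_append {h : ℤ} {L₁ L₂ : List SStep} :
    NonnegFrom h (L₁ ++ L₂) ↔ NonnegFrom h L₁ ∧ NonnegFrom (h + rise L₁) L₂ := by
  induction L₁ generalizing h with
  | nil => exact ⟨fun hL => ⟨nonnegFrom_nil.2 hL.nonneg, by simpa⟩, fun hL => by simpa using hL.2⟩
  | cons s L₁ ih => simp [ih, and_assoc, add_assoc]

lemma NonnegFrom.mono {h h' : ℤ} {L : List SStep} (hL : NonnegFrom h L) (hh : h ≤ h') :
    NonnegFrom h' L := fun i => by linarith [hL i]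

@[simp] lemma nonnegFrom_replicate_H {h : ℤ} {a : ℕ} :
    NonnegFrom h (replicate a H) ↔ 0 ≤ h := by
  induction a with
  | zero => simp
  | succ a ih => simp [replicate_succ, ih, eff]

@[simp] lemma hLevels_nil {p : ℤ → Prop} {h : ℤ} : HLevels p h [] := by simp [HLevels]

@[simp] lemma hLevels_cons {p : ℤ → Prop} {h : ℤ} {s : SStep} {L : List SStep} :
    HLevels p h (s :: L) ↔ (s = H → p h) ∧ HLevels p (h + eff s) L := by
  rw [HLevels, HLevels, ← Nat.and_forall_add_one]
  simp only [getElem?_cons_succ, sHeight_cons_succ, add_assoc]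
  simp [sHeight]

@[simp] lemma hLevels_append {p : ℤ → Prop} {h : ℤ} {L₁ L₂ : List SStep} :
    HLevels p h (L₁ ++ L₂) ↔ HLevels p h L₁ ∧ HLevels p (h + rise L₁) L₂ := by
  induction L₁ generalizing h with
  | nil => simp
  | cons s L₁ ih => simp [ih, and_assoc, add_assoc]

@[simp] lemma hLevels_replicate_H {p : ℤ → Prop} {h : ℤ} {a : ℕ} :
    HLevels p h (replicate a H) ↔ (a = 0 ∨ p h) := by
  induction a with
  | zero => simp
  | succ a ih => simp [replicate_succ, ih, eff]; tauto

@[simp] lemma uHFree_nil : UHFree [] := by simp [UHFree]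

@[simp] lemma uHFree_cons {s : SStep} {L : List SStep} :
    UHFree (s :: L) ↔ ¬(s = U ∧ L[0]? = some H) ∧ UHFree L := by
  rw [UHFree, UHFree, ← Nat.and_forall_add_one]
  simp

lemma uHFree_append {L₁ L₂ : List SStep} (h₂ : L₂[0]? ≠ some H) :
    UHFree (L₁ ++ L₂) ↔ UHFree L₁ ∧ UHFree L₂ := by
  induction L₁ with
  | nil => simp
  | cons s L₁ ih => cases L₁ <;> simp_all [and_assoc]

lemma UHFree.of_append_right {L₁ L₂ : List SStep} (h : UHFree (L₁ ++ L₂)) : UHFree L₂ := by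
  induction L₁ with
  | nil => exact h
  | cons s L₁ ih => exact ih (uHFree_cons.1 h).2

@[simp] lemma uHFree_replicate_H_append {a : ℕ} {L : List SStep} :
    UHFree (replicate a H ++ L) ↔ UHFree L := by
  induction a with
  | zero => simp
  | succ a ih => simp [replicate_succ, ih]

/-- First-return decomposition, started at height `k + 1` so that the induction goes through. -/
lemma exists_first_return (k : ℕ) {S : List SStep} (hS : NonnegFrom (k + 1) S)
    (hrise : rise S < -k) :
    ∃ w R, S = w ++ D :: R ∧ rise w = -k ∧ NonnegFrom k w := by
  induction S generalizing k with
  | nil => simp at hrise; omega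
  | cons s S ih =>
    rw [nonnegFrom_cons] at hS
    rw [rise_cons] at hrise
    cases s with
    | U =>
      obtain ⟨w, R, rfl, hw, hwn⟩ := ih (k + 1) (by push_cast; simpa [eff] using hS.2)
        (by push_cast; simp [eff] at hrise; linarith)
      refine ⟨U :: w, R, rfl, ?_, ?_⟩
      · simp [eff, hw]
      · simpa [eff] using hwn
    | H =>
      obtain ⟨w, R, rfl, hw, hwn⟩ := ih k (by simpa [eff] using hS.2) (by simpa [eff] using hrise)
      exact ⟨H :: w, R, rfl, by simp [eff, hw], by simpa [eff] using hwn⟩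
    | D =>
      cases k with
      | zero => exact ⟨[], S, rfl, by simp, by simp⟩
      | succ k =>
        obtain ⟨w, R, rfl, hw, hwn⟩ := ih k (by simpa [eff] using hS.2)
          (by push_cast at hrise; simp [eff] at hrise; linarith)
        refine ⟨D :: w, R, rfl, ?_, ?_⟩
        · simp [eff, hw]
        · exact nonnegFrom_cons.2 ⟨by positivity, by simpa [eff] using hwn⟩

lemma exists_eq_replicate_H_append (L : List SStep) :
    ∃ a X, L = replicate a H ++ X ∧ X[0]? ≠ some H := by
  induction L with
  | nil => exact ⟨0, [], rfl, by simp⟩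
  | cons s L ih =>
    cases s with
    | H =>
      obtain ⟨a, X, rfl, hX⟩ := ih
      exact ⟨a + 1, X, rfl, hX⟩
    | U => exact ⟨0, _, rfl, by simp⟩
    | D => exact ⟨0, _, rfl, by simp⟩

lemma replicate_H_append_inj {a b : ℕ} {x y : List SStep} (hx : x[0]? ≠ some H)
    (hy : y[0]? ≠ some H) (h : replicate a H ++ x = replicate b H ++ y) : a = b ∧ x = y := by
  induction a generalizing b with
  | zero => cases b <;> simp_all [replicate_succ]
  | succ a ih =>
    cases b with
    | zero => subst h; simp at hy
    | succ b => simpa using ih (by simpa [replicate_succ] using h)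

/-- Otherwise the down step after `X` would take `Y` to height `-1`. -/
lemma length_le_of_append_D_eq {X Y r s : List SStep} (hX : rise X = 0) (hY : NonnegFrom 0 Y)
    (h : X ++ D :: r = Y ++ D :: s) : Y.length ≤ X.length := by
  by_contra! hlt
  have htake : Y.take (X.length + 1) = X ++ [D] := by
    have := congrArg (take (X.length + 1)) h
    rw [take_append_of_le_length hlt] at this
    simpa [take_append, take_of_length_le] using this.symm
  have := hY (X.length + 1)
  simp [sHeight_eq_rise_take, htake, hX, eff] at this

/-- The `X` of an arch `U H^a X D` of the first kind of path, or `U X D H^a` of the second. -/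
def IsArchBody (X : List SStep) : Prop :=
  rise X = 0 ∧ NonnegFrom 0 X ∧ HLevels (· = 0) 0 X ∧ X[0]? ≠ some H

/-- `(a, X) ↦ U H^a X D`, concatenated. -/
def archesHInside : List (ℕ × List SStep) → List SStep
  | [] => []
  | (a, X) :: t => U :: (replicate a H ++ X ++ D :: archesHInside t)

/-- `(a, X) ↦ U X D H^a`, concatenated. -/
def archesHOutside : List (ℕ × List SStep) → List SStep
  | [] => []
  | (a, X) :: t => U :: (X ++ D :: (replicate a H ++ archesHOutside t))

lemma HLevels.of_flat {p : ℤ → Prop} {h : ℤ} {X : List SStep} (hX : HLevels (· = 0) 0 X)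
    (hp : p h) : HLevels p h X := fun i hi => by
  have := hX i hi
  simp only [zero_add] at this
  rwa [this, add_zero]

lemma IsArchBody.uHFree {X : List SStep} (hX : IsArchBody X) : UHFree X := by
  rintro i ⟨hU, hH⟩
  have hflat := hX.2.2.1 (i + 1) hH
  have hnonneg := hX.2.1 i
  rw [sHeight_succ_of_getElem? hU] at hflat
  simp [eff] at hflat hnonneg
  omega

lemma getElem?_zero_append_D_ne_H {X : List SStep} (hX : X[0]? ≠ some H) (r : List SStep) :
    (X ++ D :: r)[0]? ≠ some H := by
  cases X <;> simp_all

lemma getElem?_zero_archesHOutside_ne_H (t : List (ℕ × List SStep)) :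
    (archesHOutside t)[0]? ≠ some H := by
  rcases t with _ | ⟨⟨a, X⟩, t⟩ <;> simp [archesHOutside]

lemma append_D_inj {X Y r s : List SStep} (hX : rise X = 0) (hXn : NonnegFrom 0 X)
    (hY : rise Y = 0) (hYn : NonnegFrom 0 Y) (h : X ++ D :: r = Y ++ D :: s) :
    X = Y ∧ r = s := by
  have hlen := le_antisymm (length_le_of_append_D_eq hY hXn h.symm)
    (length_le_of_append_D_eq hX hYn h)
  simpa using append_inj h hlen

lemma injOn_archesHInside : Set.InjOn archesHInside {t | ∀ b ∈ t, IsArchBody b.2} := by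
  intro t₁ ht₁ t₂ ht₂ h
  induction t₁ generalizing t₂ with
  | nil => rcases t₂ with _ | ⟨⟨a, X⟩, t₂⟩ <;> simp_all [archesHInside]
  | cons b t₁ ih =>
    rcases b with ⟨a, X⟩
    rcases t₂ with _ | ⟨⟨a', X'⟩, t₂⟩
    · simp [archesHInside] at h
    simp only [Set.mem_ofPred_eq, mem_cons, forall_eq_or_imp] at ht₁ ht₂
    obtain ⟨⟨hX, hXn, -, hX0⟩, ht₁⟩ := ht₁
    obtain ⟨⟨hX', hXn', -, hX0'⟩, ht₂⟩ := ht₂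
    simp only [archesHInside, cons.injEq, true_and, append_assoc] at h
    obtain ⟨rfl, hbody⟩ := replicate_H_append_inj (getElem?_zero_append_D_ne_H hX0 _)
      (getElem?_zero_append_D_ne_H hX0' _) h
    obtain ⟨rfl, hrest⟩ := append_D_inj hX hXn hX' hXn' hbody
    rw [ih ht₁ ht₂ hrest]

lemma injOn_archesHOutside : Set.InjOn archesHOutside {t | ∀ b ∈ t, IsArchBody b.2} := by
  intro t₁ ht₁ t₂ ht₂ h
  induction t₁ generalizing t₂ with
  | nil => rcases t₂ with _ | ⟨⟨a, X⟩, t₂⟩ <;> simp_all [archesHOutside]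
  | cons b t₁ ih =>
    rcases b with ⟨a, X⟩
    rcases t₂ with _ | ⟨⟨a', X'⟩, t₂⟩
    · simp [archesHOutside] at h
    simp only [Set.mem_ofPred_eq, mem_cons, forall_eq_or_imp] at ht₁ ht₂
    obtain ⟨⟨hX, hXn, -, -⟩, ht₁⟩ := ht₁
    obtain ⟨⟨hX', hXn', -, -⟩, ht₂⟩ := ht₂
    simp only [archesHOutside, cons.injEq, true_and] at h
    obtain ⟨rfl, hafter⟩ := append_D_inj hX hXn hX' hXn' h
    obtain ⟨rfl, hrest⟩ := replicate_H_append_inj (getElem?_zero_archesHOutside_ne_H _)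
      (getElem?_zero_archesHOutside_ne_H _) hafter
    rw [ih ht₁ ht₂ hrest]

lemma archesHInside_perm_archesHOutside (t : List (ℕ × List SStep)) :
    archesHInside t ~ archesHOutside t := by
  induction t with
  | nil => rfl
  | cons b t ih =>
    rcases b with ⟨a, X⟩
    refine Perm.cons _ ?_
    calc replicate a H ++ X ++ D :: archesHInside t
        ~ X ++ replicate a H ++ D :: archesHInside t := perm_append_comm.append_right _
      _ ~ X ++ D :: (replicate a H ++ archesHInside t) := by
        rw [append_assoc]; exact perm_middle.append_left X
      _ ~ X ++ D :: (replicate a H ++ archesHOutside t) := by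
        gcongr

lemma archesHInside_spec {t : List (ℕ × List SStep)} (ht : ∀ b ∈ t, IsArchBody b.2) :
    rise (archesHInside t) = 0 ∧ NonnegFrom 0 (archesHInside t) ∧
      HLevels (· = 1) 0 (archesHInside t) := by
  induction t with
  | nil => simp [archesHInside]
  | cons b t ih =>
    rcases b with ⟨a, X⟩
    simp only [mem_cons, forall_eq_or_imp] at ht
    obtain ⟨⟨hX, hXn, hXH, -⟩, ht⟩ := ht
    obtain ⟨hrise, hnonneg, hlevels⟩ := ih ht
    simp [archesHInside, eff, hX, hrise, hnonneg, hlevels, hXn.mono zero_le_one,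
      hXH.of_flat (p := (· = 1)) rfl]

lemma archesHOutside_spec {t : List (ℕ × List SStep)} (ht : ∀ b ∈ t, IsArchBody b.2) :
    rise (archesHOutside t) = 0 ∧ NonnegFrom 0 (archesHOutside t) ∧
      HLevels (· ≤ 1) 0 (archesHOutside t) ∧ UHFree (archesHOutside t) := by
  induction t with
  | nil => simp [archesHOutside]
  | cons b t ih =>
    rcases b with ⟨a, X⟩
    simp only [mem_cons, forall_eq_or_imp] at ht
    obtain ⟨hXbody, ht⟩ := ht
    have hXUH := hXbody.uHFree
    obtain ⟨hX, hXn, hXH, hX0⟩ := hXbody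
    obtain ⟨hrise, hnonneg, hlevels, hUH⟩ := ih ht
    have hUH' : UHFree (archesHOutside ((a, X) :: t)) := by
      rw [archesHOutside, uHFree_cons, uHFree_append (by simp), uHFree_cons,
        uHFree_replicate_H_append]
      exact ⟨fun h => getElem?_zero_append_D_ne_H hX0 _ h.2, hXUH, by simp, hUH⟩
    refine ⟨?_, ?_, ?_, hUH'⟩ <;>
      simp [archesHOutside, eff, hX, hrise, hnonneg, hlevels, hXn.mono zero_le_one,
        hXH.of_flat (p := (· ≤ 1)) le_rfl]

lemma exists_archesHInside_eq {L : List SStep} (hrise : rise L = 0) (hL : NonnegFrom 0 L)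
    (hH : HLevels (· = 1) 0 L) : ∃ t, (∀ b ∈ t, IsArchBody b.2) ∧ archesHInside t = L := by
  induction hn : L.length using Nat.strong_induction_on generalizing L with
  | _ n ih =>
    rcases L with _ | ⟨s, L⟩
    · exact ⟨[], by simp, rfl⟩
    cases s with
    | D => simpa [eff] using (nonnegFrom_cons.1 hL).2.nonneg
    | H => simp at hH
    | U =>
      simp only [rise_cons, nonnegFrom_cons, hLevels_cons, eff, zero_add] at hrise hL hH
      obtain ⟨Y, R, rfl, hY, hYn⟩ := exists_first_return 0 (by simpa using hL.2) (by simp; omega)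
      obtain ⟨a, X, rfl, hX0⟩ := exists_eq_replicate_H_append Y
      simp only [rise_append, rise_replicate_H, zero_add, nonnegFrom_append,
        nonnegFrom_replicate_H, add_zero, Nat.cast_zero, neg_zero, le_refl, true_and] at hY hYn
      simp [eff, hY] at hrise hL hH
      obtain ⟨t, ht, rfl⟩ := ih R.length (by simp at hn; omega) (by linarith) hL.2 hH.2 rfl
      have hXH : HLevels (· = 0) 0 X := fun i hi => by simpa using hH.1 i hi
      refine ⟨(a, X) :: t, ?_, by simp [archesHInside]⟩
      simpa only [mem_cons, forall_eq_or_imp] using ⟨⟨hY, hYn, hXH, hX0⟩, ht⟩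

lemma exists_archesHOutside_eq {L : List SStep} (hrise : rise L = 0) (hL : NonnegFrom 0 L)
    (hH : HLevels (· ≤ 1) 0 L) (hUH : UHFree L) (h0 : L[0]? ≠ some H) :
    ∃ t, (∀ b ∈ t, IsArchBody b.2) ∧ archesHOutside t = L := by
  induction hn : L.length using Nat.strong_induction_on generalizing L with
  | _ n ih =>
    rcases L with _ | ⟨s, L⟩
    · exact ⟨[], by simp, rfl⟩
    cases s with
    | D => simpa [eff] using (nonnegFrom_cons.1 hL).2.nonneg
    | H => simp at h0
    | U =>
      simp only [rise_cons, nonnegFrom_cons, hLevels_cons, eff, zero_add] at hrise hL hH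
      obtain ⟨X, R', rfl, hX, hXn⟩ := exists_first_return 0 (by simpa using hL.2) (by simp; omega)
      obtain ⟨a, R, rfl, hR0⟩ := exists_eq_replicate_H_append R'
      simp only [Nat.cast_zero, neg_zero] at hX hXn
      simp [eff, hX] at hrise hL hH
      rw [uHFree_cons] at hUH
      have hX0 : X[0]? ≠ some H := fun h => hUH.1 ⟨rfl, by cases X <;> simp_all⟩
      have hRUH : UHFree R := by
        simpa using (uHFree_cons.1 (UHFree.of_append_right hUH.2)).2
      obtain ⟨t, ht, rfl⟩ :=
        ih R.length (by simp at hn; omega) (by linarith) hL.2 hH.2 hRUH hR0 rfl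
      have hXH : HLevels (· = 0) 0 X := fun i hi => by
        have := hH.1 i hi
        have := hXn i
        simp only [zero_add] at *
        omega
      refine ⟨(a, X) :: t, ?_, by simp [archesHOutside]⟩
      simpa only [mem_cons, forall_eq_or_imp] using ⟨⟨hX, hXn, hXH, hX0⟩, ht⟩

lemma isSchroder_iff {L : List SStep} {n : ℕ} :
    IsSchroder L n ↔ width L = 2 * n ∧ rise L = 0 ∧ NonnegFrom 0 L := by
  simp [IsSchroder, width, rise, NonnegFrom]

lemma width_archesHOutside (t : List (ℕ × List SStep)) :
    width (archesHOutside t) = width (archesHInside t) :=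
  ((archesHInside_perm_archesHOutside t).map len).sum_eq.symm

def archData (n : ℕ) : Set (List (ℕ × List SStep)) :=
  {t | (∀ b ∈ t, IsArchBody b.2) ∧ width (archesHInside t) = 2 * n}

lemma image_archesHInside_archData (n : ℕ) :
    archesHInside '' archData n =
      {L | IsSchroder L n ∧ ∀ i, L[i]? = some H → sHeight L i = 1} := by
  ext L
  simp only [Set.mem_image, Set.mem_ofPred_eq, isSchroder_iff]
  constructor
  · rintro ⟨t, ⟨ht, hwidth⟩, rfl⟩
    obtain ⟨hrise, hnonneg, hlevels⟩ := archesHInside_spec ht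
    exact ⟨⟨hwidth, hrise, hnonneg⟩, by simpa [HLevels] using hlevels⟩
  · rintro ⟨⟨hwidth, hrise, hnonneg⟩, hH⟩
    obtain ⟨t, ht, rfl⟩ := exists_archesHInside_eq hrise hnonneg (by simpa [HLevels] using hH)
    exact ⟨t, ⟨ht, hwidth⟩, rfl⟩

lemma image_archesHOutside_archData {n : ℕ} (hn : 1 ≤ n) :
    archesHOutside '' archData n =
      {L | IsSchroder L n ∧ UHFree L ∧ L[0]? = some U ∧
        ∀ i, L[i]? = some H → sHeight L i ≤ 1} := by
  ext L
  simp only [Set.mem_image, Set.mem_ofPred_eq, isSchroder_iff]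
  constructor
  · rintro ⟨t, ⟨ht, hwidth⟩, rfl⟩
    obtain ⟨hrise, hnonneg, hlevels, hUH⟩ := archesHOutside_spec ht
    refine ⟨⟨by rw [width_archesHOutside, hwidth], hrise, hnonneg⟩, hUH, ?_,
      by simpa [HLevels] using hlevels⟩
    rcases t with _ | ⟨⟨a, X⟩, t⟩
    · simp [archesHInside, width] at hwidth
      omega
    · simp [archesHOutside]
  · rintro ⟨⟨hwidth, hrise, hnonneg⟩, hUH, h0, hH⟩
    obtain ⟨t, ht, rfl⟩ := exists_archesHOutside_eq hrise hnonneg (by simpa [HLevels] using hH)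
      hUH (by simp [h0])
    exact ⟨t, ⟨ht, by rwa [← width_archesHOutside]⟩, rfl⟩

end SchroderPath

/-- For every integer `n ≥ 1`, the number of Schröder paths of length `2n` in which every
horizontal step `H²` has height `1` equals the number of UH-free Schröder paths of length
`2n` whose first step is `U` and which have no horizontal step of height greater than `1`. -/
theorem stmt7 (n : ℕ) (hn : 1 ≤ n) :
    Nat.card {L : List SStep // IsSchroder L n ∧
        ∀ i, L[i]? = some SStep.H → sHeight L i = 1} =
    Nat.card {L : List SStep // IsSchroder L n ∧ UHFree L ∧ L[0]? = some SStep.U ∧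
        ∀ i, L[i]? = some SStep.H → sHeight L i ≤ 1} := by
  have hA := Nat.card_image_of_injOn <|
    SchroderPath.injOn_archesHInside.mono (s₁ := SchroderPath.archData n) fun _ ht => ht.1
  have hB := Nat.card_image_of_injOn <|
    SchroderPath.injOn_archesHOutside.mono (s₁ := SchroderPath.archData n) fun _ ht => ht.1
  rw [SchroderPath.image_archesHInside_archData] at hA
  rw [SchroderPath.image_archesHOutside_archData hn] at hB
  exact hA.trans hB.symm
end

section
/- For every integer n ≥ 0, the number of 2-distant noncrossing partitions of [n] equals the number of 12312-avoiding partitions of [n]. -/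
/-- The maximum of the first `i` letters of `w` (and `0` if `i = 0`). -/
def prefMax (w : List ℕ) (i : ℕ) : ℕ := (w.take i).foldr max 0

/-- `w` is the canonical word of a set partition of `[n]` (where `n = w.length`):
it is a restricted growth string with letters in `{1, 2, ...}`, i.e. the `i`-th letter
is at least `1` and at most one more than the maximum of the previous letters.
(The `i`-th letter is the index of the block containing `i+1`, blocks being
ordered by their minima.) -/
def IsCanonicalWord (w : List ℕ) : Prop :=
  ∀ i, i < w.length → 1 ≤ w.getD i 0 ∧ w.getD i 0 ≤ prefMax w i + 1

/-- The number of blocks of the partition with canonical word `w`. -/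
def numBlocks (w : List ℕ) : ℕ := w.foldr max 0

/-- The canonical word `w` avoids the pattern `12312`: there is no subsequence
`b₁ b₂ b₃ b₄ b₅` (in this left-to-right order) with `b₁ = b₄`, `b₂ = b₅`
and `b₁ < b₂ < b₃`. -/
def Avoids12312 (w : List ℕ) : Prop :=
  ¬ ∃ i1 i2 i3 i4 i5, i1 < i2 ∧ i2 < i3 ∧ i3 < i4 ∧ i4 < i5 ∧ i5 < w.length ∧
    w.getD i1 0 = w.getD i4 0 ∧ w.getD i2 0 = w.getD i5 0 ∧
    w.getD i1 0 < w.getD i2 0 ∧ w.getD i2 0 < w.getD i3 0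

/-- `(i, j)` (0-indexed positions, corresponding to the elements `i+1 < j+1`) is an edge
of the partition diagram of the partition with canonical word `w`: the two elements are
in the same block and no element strictly between them is in that block. -/
def IsArc (w : List ℕ) (i j : ℕ) : Prop :=
  i < j ∧ j < w.length ∧ w.getD i 0 = w.getD j 0 ∧
    ∀ k, i < k → k < j → w.getD k 0 ≠ w.getD i 0

/-- The partition with canonical word `w` is 2-distant noncrossing: there are no two
edges `(i₁, j₁)`, `(i₂, j₂)` of its partition diagram with `i₁ < i₂ ≤ j₁ < j₂`
and `j₁ - i₂ ≥ 2`. -/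
def Is2DNC (w : List ℕ) : Prop :=
  ¬ ∃ i1 j1 i2 j2, IsArc w i1 j1 ∧ IsArc w i2 j2 ∧
    i1 < i2 ∧ i2 ≤ j1 ∧ j1 < j2 ∧ i2 + 2 ≤ j1

/-!
Both classes grow by appending one letter at a time to canonical words. A letter may be
appended to a 12312-avoiding word unless it completes a `12312`; an old letter may be appended
to a 2-distant noncrossing word unless its last occurrence lies strictly inside an arc reaching
at least two positions further, and a new block always may. Rank the admissible letters by value
in the first case, and by the position of their last occurrence, a new block last, in the
second. In both cases the admissible letters after appending `a` are those ranked below `a`,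
`a` itself and the two top-ranked letters of the new word, so both classes are generating trees
with the same succession rule and the same root, hence with equinumerous levels.
-/

open Finset

/-- The succession rule `(k) ⇝ (3)(4)⋯(k)(k)(k+1)`, giving the label of the child of rank `j`
of a node labelled `k`. -/
def succRule (k j : ℕ) : ℕ := if j + 3 ≤ k then j + 3 else j + 2

theorem card_filter_lt_union_eq_succRule {α : Type*} [DecidableEq α] {s U : Finset α}
    {f : α → ℕ} {a : α} (hU : ∀ b ∈ U, b ∈ s → f a ≤ f b)
    (hcard : #U = 2 ∧ s ⊆ {b ∈ s | f b < f a} ∪ U ∨ #U = 3 ∧ U ⊆ s) :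
    #({b ∈ s | f b < f a} ∪ U) = succRule #s #{b ∈ s | f b < f a} := by
  have hdisj : Disjoint {b ∈ s | f b < f a} U := disjoint_left.2 fun b hb hbU => by
    rw [mem_filter] at hb
    exact absurd (hU b hbU hb.1) (not_le.2 hb.2)
  rw [card_union_of_disjoint hdisj, succRule]
  rcases hcard with ⟨hU, hs⟩ | ⟨hU, hUs⟩
  · have := (card_le_card hs).trans (card_union_le _ U)
    rw [if_neg (by omega), hU]
  · have := card_le_card (union_subset (filter_subset (fun b => f b < f a) s) hUs)
    rw [card_union_of_disjoint hdisj] at this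
    rw [if_pos (by omega), hU]

section Rank

variable {α : Type*} (s : Finset α) (f : α → ℕ)

theorem card_filter_lt_lt {a b : α} (ha : a ∈ s) (hab : f a < f b) :
    #{x ∈ s | f x < f a} < #{x ∈ s | f x < f b} :=
  card_lt_card <| (ssubset_iff_of_subset fun x hx => by
    simp only [mem_filter] at hx ⊢; exact ⟨hx.1, hx.2.trans hab⟩).2
    ⟨a, by simp [ha, hab], by simp⟩

noncomputable def rankEquiv (hf : Set.InjOn f s) : s ≃ Fin #s :=
  Equiv.ofBijective (fun a => ⟨#{x ∈ s | f x < f a}, card_lt_card <|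
      (ssubset_iff_of_subset (filter_subset _ s)).2 ⟨a, a.2, by simp⟩⟩) <| by
    rw [Fintype.bijective_iff_injective_and_card]
    refine ⟨fun a b hab => Subtype.ext (hf.eq_iff a.2 b.2 |>.1 ?_), by simp⟩
    simp only [Fin.mk.injEq] at hab
    rcases lt_trichotomy (f a) (f b) with h | h | h
    · exact absurd hab (card_filter_lt_lt s f a.2 h).ne
    · exact h
    · exact absurd hab (card_filter_lt_lt s f b.2 h).ne'

end Rank

/-- The valid words are those obtained from `[]` by successively appending children; the number
of children of `w ++ [a]` is given by `rule` from the number of children of `w` and the rank of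
`a` among them for `key w`. -/
structure GeneratingTree (α : Type*) (rule : ℕ → ℕ → ℕ) where
  Valid : List α → Prop
  children : List α → Finset α
  key : List α → α → ℕ
  valid_nil : Valid []
  valid_append_iff : ∀ w a, Valid (w ++ [a]) ↔ Valid w ∧ a ∈ children w
  key_injOn : ∀ w, Set.InjOn (key w) (children w)
  card_children_append : ∀ w a, Valid w → a ∈ children w →
    #(children (w ++ [a])) = rule #(children w) #{b ∈ children w | key w b < key w a}

namespace GeneratingTree

variable {α : Type*} {rule : ℕ → ℕ → ℕ} (G : GeneratingTree α rule)

def level (n : ℕ) : Type _ := {w : List α // w.length = n ∧ G.Valid w}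

def label {n : ℕ} (w : G.level n) : ℕ := #(G.children w.1)

theorem ne_nil_of_mem_level {n : ℕ} (w : G.level (n + 1)) : w.1 ≠ [] :=
  List.ne_nil_of_length_pos (by rw [w.2.1]; exact n.succ_pos)

theorem valid_dropLast_and_getLast_mem {n : ℕ} (w : G.level (n + 1)) :
    G.Valid w.1.dropLast ∧ w.1.getLast (G.ne_nil_of_mem_level w) ∈ G.children w.1.dropLast :=
  (G.valid_append_iff _ _).1 <| by rw [List.dropLast_append_getLast]; exact w.2.2

def appendEquiv (n : ℕ) : G.level (n + 1) ≃ Σ v : G.level n, G.children v.1 where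
  toFun w := ⟨⟨w.1.dropLast, by simp [w.2.1], (G.valid_dropLast_and_getLast_mem w).1⟩,
    ⟨_, (G.valid_dropLast_and_getLast_mem w).2⟩⟩
  invFun p := ⟨p.1.1 ++ [p.2.1], by simp [p.1.2.1], (G.valid_append_iff _ _).2 ⟨p.1.2.2, p.2.2⟩⟩
  left_inv w := Subtype.ext (List.dropLast_append_getLast _)
  right_inv p := Sigma.subtype_ext (Subtype.ext List.dropLast_concat) List.getLast_concat

noncomputable def rankedAppendEquiv (n : ℕ) :
    G.level (n + 1) ≃ Σ v : G.level n, {j // j < G.label v} :=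
  (G.appendEquiv n).trans <| Equiv.sigmaCongrRight fun v =>
    (rankEquiv _ (G.key v.1) (G.key_injOn v.1)).trans Fin.equivSubtype

theorem label_eq_rule {n : ℕ} (w : G.level (n + 1)) :
    G.label w = rule (G.label (G.rankedAppendEquiv n w).1) (G.rankedAppendEquiv n w).2 := by
  have := G.card_children_append _ _ (G.valid_dropLast_and_getLast_mem w).1
    (G.valid_dropLast_and_getLast_mem w).2
  rwa [List.dropLast_append_getLast] at this

theorem exists_levelEquiv (G₁ G₂ : GeneratingTree α rule)
    (hroot : #(G₁.children []) = #(G₂.children [])) (n : ℕ) :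
    ∃ e : G₁.level n ≃ G₂.level n, ∀ v, G₁.label v = G₂.label (e v) := by
  induction n with
  | zero =>
    have hnil {G : GeneratingTree α rule} (v : G.level 0) : v.1 = [] :=
      List.eq_nil_of_length_eq_zero v.2.1
    refine ⟨⟨fun _ => ⟨[], rfl, G₂.valid_nil⟩, fun _ => ⟨[], rfl, G₁.valid_nil⟩,
      fun v => Subtype.ext (hnil v).symm, fun v => Subtype.ext (hnil v).symm⟩, fun v => ?_⟩
    simp only [label, hnil v, hroot]
    rfl
  | succ n ih =>
    obtain ⟨e, he⟩ := ih
    let e' := (G₁.rankedAppendEquiv n).trans <| Equiv.trans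
      { toFun p := ⟨e p.1, p.2.1, he p.1 ▸ p.2.2⟩
        invFun q := ⟨e.symm q.1, q.2.1, by simpa [he] using q.2.2⟩
        left_inv p := Sigma.subtype_ext (e.symm_apply_apply _) rfl
        right_inv q := Sigma.subtype_ext (e.apply_symm_apply _) rfl }
      (G₂.rankedAppendEquiv n).symm
    refine ⟨e', fun w => ?_⟩
    rw [G₂.label_eq_rule (e' w), G₁.label_eq_rule w]
    simp only [e', Equiv.trans_apply, Equiv.coe_fn_mk, he]
    rw [Equiv.apply_symm_apply]

theorem card_level_eq (G₁ G₂ : GeneratingTree α rule)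
    (hroot : #(G₁.children []) = #(G₂.children [])) (n : ℕ) :
    Nat.card (G₁.level n) = Nat.card (G₂.level n) :=
  Nat.card_congr (G₁.exists_levelEquiv G₂ hroot n).choose

end GeneratingTree

namespace CanonicalWord

theorem getD_append_length (w : List ℕ) (a : ℕ) : (w ++ [a]).getD w.length 0 = a := by
  simp

theorem numBlocks_append (w : List ℕ) (a : ℕ) : numBlocks (w ++ [a]) = max (numBlocks w) a := by
  induction w with
  | nil => simp [numBlocks]
  | cons x t ih =>
    simp only [numBlocks, List.cons_append, List.foldr_cons] at ih ⊢
    rw [ih, max_assoc]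

theorem isCanonicalWord_nil : IsCanonicalWord [] := by simp [IsCanonicalWord]

theorem isCanonicalWord_append_iff (w : List ℕ) (a : ℕ) :
    IsCanonicalWord (w ++ [a]) ↔ IsCanonicalWord w ∧ 1 ≤ a ∧ a ≤ numBlocks w + 1 := by
  have hpref {i} (hi : i ≤ w.length) : prefMax (w ++ [a]) i = prefMax w i := by
    simp [prefMax, List.take_append_of_le_length hi]
  have hlast : prefMax w w.length = numBlocks w := by simp [prefMax, numBlocks]
  simp +contextual only [IsCanonicalWord, List.length_append, List.length_singleton,
    Nat.lt_succ_iff_lt_or_eq, or_imp, forall_and, forall_eq, List.getD_append, le_of_lt, hpref,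
    le_refl, getD_append_length, hlast]
  tauto

theorem getD_le_numBlocks {w : List ℕ} {i : ℕ} (hi : i < w.length) : w.getD i 0 ≤ numBlocks w := by
  induction w generalizing i with
  | nil => simp at hi
  | cons x t ih =>
    cases i with
    | zero => simp [numBlocks]
    | succ i => exact (ih (by simpa using hi)).trans (le_max_right x _)

theorem exists_getD_eq_of_le_numBlocks {w : List ℕ} (hw : IsCanonicalWord w) {b : ℕ}
    (hb : 1 ≤ b) (hbw : b ≤ numBlocks w) : ∃ i < w.length, w.getD i 0 = b := by
  induction w using List.reverseRecOn with
  | nil => simp [numBlocks] at hbw; omega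
  | append_singleton t x ih =>
    rw [isCanonicalWord_append_iff] at hw
    rw [numBlocks_append] at hbw
    rcases le_or_gt b (numBlocks t) with hbt | hbt
    · obtain ⟨i, hi, rfl⟩ := ih hw.1 hbt
      exact ⟨i, by simp; omega, List.getD_append _ _ _ _ hi⟩
    · exact ⟨t.length, by simp, by rw [getD_append_length]; omega⟩

theorem exists_lt_getD_eq {w : List ℕ} (hw : IsCanonicalWord w) {j b : ℕ} (hj : j < w.length)
    (hb : 1 ≤ b) (hbj : b < w.getD j 0) : ∃ i < j, w.getD i 0 = b := by
  induction w using List.reverseRecOn with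
  | nil => simp at hj
  | append_singleton t x ih =>
    rw [isCanonicalWord_append_iff] at hw
    rcases (by simpa [Nat.lt_succ_iff] using hj : j ≤ t.length).lt_or_eq with hjt | rfl
    · obtain ⟨i, hij, rfl⟩ := ih hw.1 hjt (by rwa [List.getD_append _ _ _ _ hjt] at hbj)
      exact ⟨i, hij, List.getD_append _ _ _ _ (hij.trans hjt)⟩
    · rw [getD_append_length] at hbj
      obtain ⟨i, hi, rfl⟩ := exists_getD_eq_of_le_numBlocks hw.1 hb (by omega)
      exact ⟨i, hi, List.getD_append _ _ _ _ hi⟩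

def Completes12312 (w : List ℕ) (b : ℕ) : Prop :=
  ∃ i₁ i₂ i₃ i₄, i₁ < i₂ ∧ i₂ < i₃ ∧ i₃ < i₄ ∧ i₄ < w.length ∧
    w.getD i₁ 0 = w.getD i₄ 0 ∧ w.getD i₂ 0 = b ∧ w.getD i₁ 0 < b ∧ b < w.getD i₃ 0

theorem avoids12312_nil : Avoids12312 [] := by simp [Avoids12312]

theorem avoids12312_append_iff (w : List ℕ) (a : ℕ) :
    Avoids12312 (w ++ [a]) ↔ Avoids12312 w ∧ ¬Completes12312 w a := by
  rw [Avoids12312, Avoids12312, ← not_or, not_iff_not]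
  constructor
  · rintro ⟨i₁, i₂, i₃, i₄, i₅, h₁₂, h₂₃, h₃₄, h₄₅, h₅, h₁₄, h₂₅, hlt₁₂, hlt₂₃⟩
    simp only [List.length_append, List.length_singleton, Nat.lt_succ_iff] at h₅
    rcases h₅.lt_or_eq with h₅ | rfl
    · simp (disch := omega) only [List.getD_append] at *
      exact Or.inl ⟨i₁, i₂, i₃, i₄, i₅, by omega⟩
    · simp (disch := omega) only [List.getD_append, getD_append_length] at *
      exact Or.inr ⟨i₁, i₂, i₃, i₄, by omega⟩
  · rintro (⟨i₁, i₂, i₃, i₄, i₅, h⟩ | ⟨i₁, i₂, i₃, i₄, h⟩)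
    · refine ⟨i₁, i₂, i₃, i₄, i₅, ?_⟩
      simp (disch := omega) only [List.getD_append, List.length_append, List.length_singleton]
      omega
    · refine ⟨i₁, i₂, i₃, i₄, w.length, ?_⟩
      simp (disch := omega) only [List.getD_append, getD_append_length, List.length_append,
        List.length_singleton]
      omega

theorem completes12312_append_iff {w : List ℕ} {a : ℕ} (hwa : IsCanonicalWord (w ++ [a]))
    (b : ℕ) :
    Completes12312 (w ++ [a]) b ↔ b < numBlocks (w ++ [a]) ∧ (a < b ∨ Completes12312 w b) := by
  obtain ⟨hw, ha, haw⟩ := (isCanonicalWord_append_iff w a).1 hwa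
  rw [numBlocks_append]
  constructor
  · rintro ⟨i₁, i₂, i₃, i₄, h₁₂, h₂₃, h₃₄, h₄, h₁₄, rfl, hlt₁₂, hlt₂₃⟩
    have h₃ := getD_le_numBlocks (show i₃ < (w ++ [a]).length by omega)
    rw [numBlocks_append] at h₃
    refine ⟨by omega, or_iff_not_imp_left.2 fun hab => ?_⟩
    simp only [List.length_append, List.length_singleton, Nat.lt_succ_iff] at h₄
    rcases h₄.lt_or_eq with h₄ | rfl
    · simp (disch := omega) only [List.getD_append] at *
      exact ⟨i₁, i₂, i₃, i₄, by omega⟩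
    · simp (disch := omega) only [List.getD_append, getD_append_length] at *
      omega
  · rintro ⟨hbw, hab | ⟨i₁, i₂, i₃, i₄, h⟩⟩
    · obtain ⟨k, hk, hkw⟩ := exists_getD_eq_of_le_numBlocks hw (b := numBlocks w) (by omega) le_rfl
      obtain ⟨j, hjk, rfl⟩ := exists_lt_getD_eq hw hk (by omega) (b := b) (by omega)
      obtain ⟨i, hij, rfl⟩ := exists_lt_getD_eq hw (hjk.trans hk) ha hab
      refine ⟨i, j, k, w.length, hij, hjk, hk, by simp, ?_⟩
      simp (disch := omega) only [List.getD_append, getD_append_length, true_and]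
      omega
    · refine ⟨i₁, i₂, i₃, i₄, ?_⟩
      simp (disch := omega) only [List.getD_append, List.length_append, List.length_singleton]
      omega

theorem not_completes12312_of_numBlocks_le {w : List ℕ} {b : ℕ} (hb : numBlocks w ≤ b) :
    ¬Completes12312 w b := by
  rintro ⟨-, -, i₃, i₄, -, -, h₃₄, h₄, -, -, -, hb₃⟩
  have := getD_le_numBlocks (h₃₄.trans h₄)
  omega

open Classical in
noncomputable def avoidChildren (w : List ℕ) : Finset ℕ :=
  {b ∈ Icc 1 (numBlocks w + 1) | ¬Completes12312 w b}

theorem mem_avoidChildren {w : List ℕ} {b : ℕ} :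
    b ∈ avoidChildren w ↔ 1 ≤ b ∧ b ≤ numBlocks w + 1 ∧ ¬Completes12312 w b := by
  simp [avoidChildren, and_assoc]

theorem avoidChildren_nil : avoidChildren [] = {1} := by
  ext b
  rw [mem_avoidChildren, mem_singleton]
  have : numBlocks [] = 0 := rfl
  constructor
  · omega
  · rintro rfl
    exact ⟨le_rfl, by omega, not_completes12312_of_numBlocks_le (by omega)⟩

theorem isCanonicalWord_and_avoids12312_append_iff (w : List ℕ) (a : ℕ) :
    (IsCanonicalWord (w ++ [a]) ∧ Avoids12312 (w ++ [a])) ↔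
      (IsCanonicalWord w ∧ Avoids12312 w) ∧ a ∈ avoidChildren w := by
  rw [isCanonicalWord_append_iff, avoids12312_append_iff, mem_avoidChildren]
  tauto

theorem avoidChildren_append {w : List ℕ} {a : ℕ} (hwa : IsCanonicalWord (w ++ [a]))
    (ha : ¬Completes12312 w a) :
    avoidChildren (w ++ [a]) =
      {b ∈ avoidChildren w | b < a} ∪ {a, numBlocks (w ++ [a]), numBlocks (w ++ [a]) + 1} := by
  have hnb := @not_completes12312_of_numBlocks_le w
  have hM := numBlocks_append w a
  have ha1 := ((isCanonicalWord_append_iff w a).1 hwa).2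
  ext b
  simp only [mem_union, mem_filter, mem_avoidChildren, completes12312_append_iff hwa, mem_insert,
    mem_singleton]
  by_cases hC : Completes12312 w b
  · have hbw : b < numBlocks w := by by_contra h; exact hnb (not_lt.1 h) hC
    have hba : b ≠ a := by rintro rfl; exact ha hC
    simp only [hC, or_true, and_true, not_true, and_false, false_and, false_or]
    omega
  · simp only [hC, or_false, not_false_eq_true, and_true]
    omega

theorem card_avoidChildren_append {w : List ℕ} {a : ℕ} (hw : IsCanonicalWord w)
    (ha : a ∈ avoidChildren w) :
    #(avoidChildren (w ++ [a])) = succRule #(avoidChildren w) #{b ∈ avoidChildren w | b < a} := by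
  obtain ⟨ha1, haw, ha⟩ := mem_avoidChildren.1 ha
  have hwa := (isCanonicalWord_append_iff w a).2 ⟨hw, ha1, haw⟩
  have hM := numBlocks_append w a
  rw [avoidChildren_append hwa ha]
  refine card_filter_lt_union_eq_succRule (f := id) (fun b hb _ => ?_) ?_
  · simp only [mem_insert, mem_singleton] at hb
    simp only [id]
    omega
  rcases lt_or_ge a (numBlocks w) with haw | haw
  · refine Or.inr ⟨?_, ?_⟩
    · rw [card_insert_of_notMem (by simp; omega), card_pair (by omega)]
    · simp only [insert_subset_iff, singleton_subset_iff, mem_avoidChildren]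
      exact ⟨⟨ha1, by omega, ha⟩,
        ⟨by omega, by omega, not_completes12312_of_numBlocks_le (by omega)⟩,
        ⟨by omega, by omega, not_completes12312_of_numBlocks_le (by omega)⟩⟩
  · have hMa : numBlocks (w ++ [a]) = a := by omega
    refine Or.inl ⟨by rw [hMa, insert_eq_self.2 (mem_insert_self _ _), card_pair (by omega)], ?_⟩
    intro b hb
    have := mem_avoidChildren.1 hb
    simp only [mem_union, mem_filter, mem_insert, mem_singleton, hb, true_and, id]
    omega

def occSet (w : List ℕ) (b : ℕ) : Finset ℕ := {i ∈ range w.length | w.getD i 0 = b}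

def lastPos (w : List ℕ) (b : ℕ) : ℕ := (occSet w b).sup id

section LastPos

variable {w : List ℕ} {a b i : ℕ}

theorem mem_occSet : i ∈ occSet w b ↔ i < w.length ∧ w.getD i 0 = b := by simp [occSet]

theorem le_lastPos (h : i ∈ occSet w b) : i ≤ lastPos w b := le_sup (f := id) h

theorem lastPos_mem (h : (occSet w b).Nonempty) : lastPos w b ∈ occSet w b := by
  obtain ⟨i, hi, he⟩ := exists_mem_eq_sup _ h id
  rw [lastPos, he]
  exact hi

theorem lastPos_lt (h : (occSet w b).Nonempty) : lastPos w b < w.length :=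
  (mem_occSet.1 (lastPos_mem h)).1

theorem getD_lastPos (h : (occSet w b).Nonempty) : w.getD (lastPos w b) 0 = b :=
  (mem_occSet.1 (lastPos_mem h)).2

theorem lastPos_eq_of_getD_eq (h : i < w.length) (hi : w.getD i 0 = b)
    (hlast : ∀ j, i < j → j < w.length → w.getD j 0 ≠ b) : lastPos w b = i := by
  refine le_antisymm (Finset.sup_le fun j hj => ?_) (le_lastPos (mem_occSet.2 ⟨h, hi⟩))
  obtain ⟨hj, hjb⟩ := mem_occSet.1 hj
  by_contra hij
  exact hlast j (by simpa using hij) hj hjb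

theorem occSet_append_of_ne (hba : b ≠ a) : occSet (w ++ [a]) b = occSet w b := by
  ext i
  simp only [mem_occSet, List.length_append, List.length_singleton, Nat.lt_succ_iff]
  constructor
  · rintro ⟨hi, he⟩
    rcases hi.lt_or_eq with hi | rfl
    · exact ⟨hi, by rwa [List.getD_append _ _ _ _ hi] at he⟩
    · exact absurd (getD_append_length w a ▸ he).symm hba
  · rintro ⟨hi, he⟩
    exact ⟨hi.le, by rwa [List.getD_append _ _ _ _ hi]⟩

theorem lastPos_append_of_ne (hba : b ≠ a) : lastPos (w ++ [a]) b = lastPos w b := by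
  rw [lastPos, lastPos, occSet_append_of_ne hba]

theorem lastPos_append_self : lastPos (w ++ [a]) a = w.length :=
  lastPos_eq_of_getD_eq (by simp) (getD_append_length w a) (by simp; omega)

theorem isArc_append_iff {j : ℕ} :
    IsArc (w ++ [a]) i j ↔
      IsArc w i j ∨ (j = w.length ∧ (occSet w a).Nonempty ∧ i = lastPos w a) := by
  have hget {k} (hk : k < w.length) := List.getD_append w [a] 0 k hk
  simp only [IsArc, List.length_append, List.length_singleton, Nat.lt_succ_iff]
  constructor
  · rintro ⟨hij, hj, he, hk⟩
    have hk' (k) (hik : i < k) (hkj : k < j) : w.getD k 0 ≠ w.getD i 0 := by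
      simpa only [hget (hkj.trans_le hj), hget (hij.trans_le hj)] using hk k hik hkj
    rcases hj.lt_or_eq with hj | rfl
    · rw [hget hj, hget (hij.trans hj)] at he
      exact Or.inl ⟨hij, hj, he, hk'⟩
    · rw [hget hij, getD_append_length] at he
      exact Or.inr ⟨rfl, ⟨i, mem_occSet.2 ⟨hij, he⟩⟩,
        (lastPos_eq_of_getD_eq hij he fun k hik hkj => he ▸ hk' k hik hkj).symm⟩
  · rintro (⟨hij, hj, he, hk⟩ | ⟨rfl, ha, rfl⟩)
    · refine ⟨hij, hj.le, by rw [hget hj, hget (hij.trans hj), he], fun k hik hkj => ?_⟩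
      rw [hget (hkj.trans hj), hget (hij.trans hj)]
      exact hk k hik hkj
    · refine ⟨lastPos_lt ha, le_rfl, by rw [hget (lastPos_lt ha), getD_lastPos ha,
        getD_append_length], fun k hik hkj => ?_⟩
      rw [hget hkj, hget (lastPos_lt ha), getD_lastPos ha]
      exact fun hka => absurd (le_lastPos (mem_occSet.2 ⟨hkj, hka⟩)) (not_le.2 hik)

def IsCovered (w : List ℕ) (p : ℕ) : Prop := ∃ i j, IsArc w i j ∧ i < p ∧ p + 2 ≤ j

theorem isCovered_append_iff {p : ℕ} :
    IsCovered (w ++ [a]) p ↔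
      IsCovered w p ∨ ((occSet w a).Nonempty ∧ lastPos w a < p ∧ p + 2 ≤ w.length) := by
  simp only [IsCovered, isArc_append_iff]
  constructor
  · rintro ⟨i, j, h | ⟨rfl, ha, rfl⟩, hip, hpj⟩
    exacts [Or.inl ⟨i, j, h, hip, hpj⟩, Or.inr ⟨ha, hip, hpj⟩]
  · rintro (⟨i, j, h, hip, hpj⟩ | ⟨ha, hip, hpj⟩)
    exacts [⟨i, j, Or.inl h, hip, hpj⟩, ⟨_, _, Or.inr ⟨rfl, ha, rfl⟩, hip, hpj⟩]

theorem is2DNC_append_iff :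
    Is2DNC (w ++ [a]) ↔ Is2DNC w ∧ ((occSet w a).Nonempty → ¬IsCovered w (lastPos w a)) := by
  simp only [Is2DNC, IsCovered, isArc_append_iff, not_exists, not_and]
  constructor
  · intro h
    refine ⟨fun i₁ j₁ i₂ j₂ h₁ h₂ => h i₁ j₁ i₂ j₂ (Or.inl h₁) (Or.inl h₂),
      fun ha i j hij hi hj => h i j _ w.length (Or.inl hij) (Or.inr ⟨rfl, ha, rfl⟩) hi
        (by omega) hij.2.1 hj⟩
  · rintro ⟨h, hcov⟩ i₁ j₁ i₂ j₂ (h₁ | ⟨rfl, -, rfl⟩) (h₂ | ⟨rfl, ha, rfl⟩) h₁₂ h₂₁ hj₁₂ hd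
    · exact h i₁ j₁ i₂ j₂ h₁ h₂ h₁₂ h₂₁ hj₁₂ hd
    · exact hcov ha i₁ j₁ h₁ h₁₂ hd
    · exact absurd h₂.2.1 (by omega)
    · omega

end LastPos

theorem is2DNC_nil : Is2DNC [] := fun ⟨_, _, _, _, h, _⟩ => by simpa using h.2.1

/-- Appending `b` adds exactly the arc `(lastPos w b, w.length)`, which is in a 2-distant
crossing exactly when `lastPos w b` is covered. -/
def Appendable (w : List ℕ) (b : ℕ) : Prop := (occSet w b).Nonempty ∧ ¬IsCovered w (lastPos w b)

open Classical in
noncomputable def dncKey (w : List ℕ) (b : ℕ) : ℕ :=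
  if (occSet w b).Nonempty then lastPos w b else w.length

section Appendable

variable {w : List ℕ} {a b : ℕ}

theorem dncKey_of_appendable (hb : Appendable w b) : dncKey w b = lastPos w b := if_pos hb.1

theorem dncKey_lt_of_appendable (hb : Appendable w b) : dncKey w b < w.length :=
  dncKey_of_appendable hb ▸ lastPos_lt hb.1

theorem appendable_append_self : Appendable (w ++ [a]) a := by
  refine ⟨⟨w.length, mem_occSet.2 ⟨by simp, getD_append_length w a⟩⟩, ?_⟩
  rintro ⟨i, j, hij, -, hj⟩
  have := hij.2.1
  simp only [lastPos_append_self, List.length_append, List.length_singleton] at hj this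
  omega

theorem appendable_append_iff_of_ne (hba : b ≠ a) :
    Appendable (w ++ [a]) b ↔
      Appendable w b ∧ (dncKey w b < dncKey w a ∨ dncKey w b + 1 = w.length) := by
  rw [Appendable, Appendable, occSet_append_of_ne hba, lastPos_append_of_ne hba,
    isCovered_append_iff]
  constructor
  · rintro ⟨hb, hcov⟩
    push Not at hcov
    refine ⟨⟨hb, hcov.1⟩, ?_⟩
    have := lastPos_lt hb
    unfold dncKey
    split_ifs with ha
    · have hne : lastPos w b ≠ lastPos w a := fun h => hba (by
        rw [← getD_lastPos hb, h, getD_lastPos ha])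
      have := hcov.2 ha
      omega
    · exact Or.inl this
  · rintro ⟨⟨hb, hcov⟩, hkey⟩
    refine ⟨hb, ?_⟩
    rintro (h | ⟨ha, hlt, hlen⟩)
    · exact hcov h
    · rw [dncKey, dncKey, if_pos hb, if_pos ha] at hkey
      omega

theorem le_numBlocks_of_appendable (hb : Appendable w b) : b ≤ numBlocks w :=
  getD_lastPos hb.1 ▸ getD_le_numBlocks (lastPos_lt hb.1)

theorem not_occurs_numBlocks_add_one : ¬(occSet w (numBlocks w + 1)).Nonempty := fun h => by
  have := getD_le_numBlocks (lastPos_lt h)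
  rw [getD_lastPos h] at this
  omega

theorem dncKey_numBlocks_add_one : dncKey w (numBlocks w + 1) = w.length :=
  if_neg not_occurs_numBlocks_add_one

theorem eq_of_dncKey_eq {c : ℕ} (hb : Appendable w b) (hc : Appendable w c)
    (h : dncKey w b = dncKey w c) : b = c := by
  rw [dncKey_of_appendable hb, dncKey_of_appendable hc] at h
  rw [← getD_lastPos hb.1, h, getD_lastPos hc.1]

theorem appendable_getD_last (hw : w ≠ []) :
    Appendable w (w.getD (w.length - 1) 0) ∧ dncKey w (w.getD (w.length - 1) 0) + 1 = w.length := by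
  have hlen := List.length_pos_iff.2 hw
  have hocc : (occSet w (w.getD (w.length - 1) 0)).Nonempty :=
    ⟨w.length - 1, mem_occSet.2 ⟨by omega, rfl⟩⟩
  have hlast : lastPos w (w.getD (w.length - 1) 0) = w.length - 1 :=
    lastPos_eq_of_getD_eq (by omega) rfl (by omega)
  have happ : Appendable w (w.getD (w.length - 1) 0) := by
    refine ⟨hocc, ?_⟩
    rintro ⟨i, j, hij, -, hj⟩
    have := hij.2.1
    omega
  exact ⟨happ, by rw [dncKey_of_appendable happ, hlast]; omega⟩

end Appendable

open Classical in
noncomputable def dncChildren (w : List ℕ) : Finset ℕ :=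
  insert (numBlocks w + 1) {b ∈ Iic (numBlocks w) | Appendable w b}

section Children

variable {w : List ℕ} {a b : ℕ}

theorem mem_dncChildren : b ∈ dncChildren w ↔ b = numBlocks w + 1 ∨ Appendable w b := by
  simp only [dncChildren, mem_insert, mem_filter, mem_Iic]
  exact or_congr_right ⟨And.right, fun h => ⟨le_numBlocks_of_appendable h, h⟩⟩

theorem dncChildren_nil : dncChildren [] = {1} := by
  ext b
  simp [mem_dncChildren, Appendable, occSet, numBlocks]

theorem dncKey_injOn : Set.InjOn (dncKey w) (dncChildren w) := by
  intro b hb c hc h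
  rcases mem_dncChildren.1 hb with rfl | hb <;> rcases mem_dncChildren.1 hc with rfl | hc
  · rfl
  · have := dncKey_lt_of_appendable hc
    rw [dncKey_numBlocks_add_one] at h
    omega
  · have := dncKey_lt_of_appendable hb
    rw [dncKey_numBlocks_add_one] at h
    omega
  · exact eq_of_dncKey_eq hb hc h

theorem isCanonicalWord_and_is2DNC_append_iff :
    (IsCanonicalWord (w ++ [a]) ∧ Is2DNC (w ++ [a])) ↔
      (IsCanonicalWord w ∧ Is2DNC w) ∧ a ∈ dncChildren w := by
  rw [isCanonicalWord_append_iff, is2DNC_append_iff, mem_dncChildren]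
  constructor
  · rintro ⟨⟨hw, ha, haw⟩, hd, hcov⟩
    refine ⟨⟨hw, hd⟩, haw.lt_or_eq.elim (fun haw => Or.inr ?_) Or.inl⟩
    obtain ⟨i, hi, rfl⟩ := exists_getD_eq_of_le_numBlocks hw ha (by omega)
    have hocc : (occSet w (w.getD i 0)).Nonempty := ⟨i, mem_occSet.2 ⟨hi, rfl⟩⟩
    exact ⟨hocc, hcov hocc⟩
  · rintro ⟨⟨hw, hd⟩, rfl | ha⟩
    · exact ⟨⟨hw, by omega, le_rfl⟩, hd, fun h => absurd h not_occurs_numBlocks_add_one⟩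
    · have ha1 := getD_lastPos ha.1 ▸ (hw _ (lastPos_lt ha.1)).1
      exact ⟨⟨hw, ha1, (le_numBlocks_of_appendable ha).trans (Nat.le_succ _)⟩, hd, fun _ => ha.2⟩

theorem mem_dncChildren_append :
    b ∈ dncChildren (w ++ [a]) ↔ b = numBlocks (w ++ [a]) + 1 ∨ b = a ∨
      (Appendable w b ∧ (dncKey w b < dncKey w a ∨ dncKey w b + 1 = w.length)) := by
  rw [mem_dncChildren]
  by_cases hba : b = a
  · simp [hba, appendable_append_self]
  · simp [hba, appendable_append_iff_of_ne hba]

theorem dncChildren_append_numBlocks_add_one (ha : a = numBlocks w + 1) :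
    dncChildren (w ++ [a]) =
      {b ∈ dncChildren w | dncKey w b < dncKey w a} ∪ {a, numBlocks w + 2} := by
  have hM : numBlocks (w ++ [a]) = numBlocks w + 1 := by rw [numBlocks_append]; omega
  have hka : dncKey w a = w.length := ha ▸ dncKey_numBlocks_add_one
  ext b
  rw [mem_dncChildren_append]
  simp only [mem_union, mem_filter, mem_dncChildren, mem_insert, mem_singleton, hM, hka]
  constructor
  · rintro (h | h | ⟨hb, -⟩)
    · exact Or.inr (Or.inr h)
    · exact Or.inr (Or.inl h)
    · exact Or.inl ⟨Or.inr hb, dncKey_lt_of_appendable hb⟩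
  · rintro (⟨rfl | hb, hlt⟩ | h | h)
    · rw [dncKey_numBlocks_add_one] at hlt
      omega
    · exact Or.inr (Or.inr ⟨hb, Or.inl hlt⟩)
    · exact Or.inr (Or.inl h)
    · exact Or.inl h

theorem dncChildren_append_of_dncKey_add_one_eq (ha : Appendable w a)
    (hka : dncKey w a + 1 = w.length) :
    dncChildren (w ++ [a]) =
      {b ∈ dncChildren w | dncKey w b < dncKey w a} ∪ {a, numBlocks w + 1} := by
  have hM : numBlocks (w ++ [a]) = numBlocks w := by
    rw [numBlocks_append, max_eq_left (le_numBlocks_of_appendable ha)]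
  ext b
  rw [mem_dncChildren_append]
  simp only [mem_union, mem_filter, mem_dncChildren, mem_insert, mem_singleton, hM]
  constructor
  · rintro (h | h | ⟨hb, hlt | hkb⟩)
    · exact Or.inr (Or.inr h)
    · exact Or.inr (Or.inl h)
    · exact Or.inl ⟨Or.inr hb, hlt⟩
    · exact Or.inr (Or.inl (eq_of_dncKey_eq hb ha (by omega)))
  · rintro (⟨rfl | hb, hlt⟩ | h | h)
    · rw [dncKey_numBlocks_add_one] at hlt
      omega
    · exact Or.inr (Or.inr ⟨hb, Or.inl hlt⟩)
    · exact Or.inr (Or.inl h)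
    · exact Or.inl h

theorem dncChildren_append_of_dncKey_add_one_lt (ha : Appendable w a)
    (hka : dncKey w a + 1 < w.length) :
    dncChildren (w ++ [a]) =
      {b ∈ dncChildren w | dncKey w b < dncKey w a} ∪
        {a, w.getD (w.length - 1) 0, numBlocks w + 1} := by
  have hM : numBlocks (w ++ [a]) = numBlocks w := by
    rw [numBlocks_append, max_eq_left (le_numBlocks_of_appendable ha)]
  obtain ⟨hl, hkl⟩ := appendable_getD_last (List.ne_nil_of_length_pos (by omega : 0 < w.length))
  ext b
  rw [mem_dncChildren_append]
  simp only [mem_union, mem_filter, mem_dncChildren, mem_insert, mem_singleton, hM]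
  constructor
  · rintro (h | h | ⟨hb, hlt | hkb⟩)
    · exact Or.inr (Or.inr (Or.inr h))
    · exact Or.inr (Or.inl h)
    · exact Or.inl ⟨Or.inr hb, hlt⟩
    · exact Or.inr (Or.inr (Or.inl (eq_of_dncKey_eq hb hl (by omega))))
  · rintro (⟨rfl | hb, hlt⟩ | h | rfl | h)
    · rw [dncKey_numBlocks_add_one] at hlt
      omega
    · exact Or.inr (Or.inr ⟨hb, Or.inl hlt⟩)
    · exact Or.inr (Or.inl h)
    · exact Or.inr (Or.inr ⟨hl, Or.inr hkl⟩)
    · exact Or.inl h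

theorem card_dncChildren_append_numBlocks_add_one (ha : a = numBlocks w + 1) :
    #(dncChildren (w ++ [a])) =
      succRule #(dncChildren w) #{b ∈ dncChildren w | dncKey w b < dncKey w a} := by
  have hka : dncKey w a = w.length := ha ▸ dncKey_numBlocks_add_one
  rw [dncChildren_append_numBlocks_add_one ha]
  refine card_filter_lt_union_eq_succRule (fun b hb hbw => ?_)
    (Or.inl ⟨card_pair (by omega), fun b hb => ?_⟩)
  · rcases mem_insert.1 hb with rfl | hb
    · exact le_rfl
    · rw [mem_singleton.1 hb] at hbw
      rcases mem_dncChildren.1 hbw with h | h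
      · omega
      · exact absurd (le_numBlocks_of_appendable h) (by omega)
  · rw [mem_union, mem_filter, mem_insert]
    rcases mem_dncChildren.1 hb with rfl | hb'
    · exact Or.inr (Or.inl ha.symm)
    · exact Or.inl ⟨hb, hka ▸ dncKey_lt_of_appendable hb'⟩

theorem card_dncChildren_append_of_dncKey_add_one_eq (ha : Appendable w a)
    (hka : dncKey w a + 1 = w.length) :
    #(dncChildren (w ++ [a])) =
      succRule #(dncChildren w) #{b ∈ dncChildren w | dncKey w b < dncKey w a} := by
  have haM := le_numBlocks_of_appendable ha
  rw [dncChildren_append_of_dncKey_add_one_eq ha hka]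
  refine card_filter_lt_union_eq_succRule (fun b hb _ => ?_)
    (Or.inl ⟨card_pair (by omega), fun b hb => ?_⟩)
  · rcases mem_insert.1 hb with rfl | hb
    · exact le_rfl
    · rw [mem_singleton.1 hb, dncKey_numBlocks_add_one]
      omega
  · rw [mem_union, mem_filter, mem_insert, mem_singleton]
    rcases mem_dncChildren.1 hb with rfl | hb'
    · exact Or.inr (Or.inr rfl)
    · rcases lt_or_ge (dncKey w b) (dncKey w a) with h | h
      · exact Or.inl ⟨hb, h⟩
      · have := dncKey_lt_of_appendable hb'
        exact Or.inr (Or.inl (eq_of_dncKey_eq hb' ha (by omega)))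

theorem card_dncChildren_append_of_dncKey_add_one_lt (ha : Appendable w a)
    (hka : dncKey w a + 1 < w.length) :
    #(dncChildren (w ++ [a])) =
      succRule #(dncChildren w) #{b ∈ dncChildren w | dncKey w b < dncKey w a} := by
  obtain ⟨hl, hkl⟩ := appendable_getD_last (List.ne_nil_of_length_pos (l := w) (by omega))
  have haM := le_numBlocks_of_appendable ha
  have hlM := le_numBlocks_of_appendable hl
  have hal : a ≠ w.getD (w.length - 1) 0 := fun h => by rw [h] at hka; omega
  rw [dncChildren_append_of_dncKey_add_one_lt ha hka]
  refine card_filter_lt_union_eq_succRule (fun b hb _ => ?_) (Or.inr ⟨?_, ?_⟩)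
  · simp only [mem_insert, mem_singleton] at hb
    rcases hb with rfl | rfl | rfl
    · exact le_rfl
    · omega
    · rw [dncKey_numBlocks_add_one]
      omega
  · rw [card_insert_of_notMem (by simp only [mem_insert, mem_singleton]; omega),
      card_pair (by omega)]
  · simp only [insert_subset_iff, singleton_subset_iff, mem_dncChildren]
    exact ⟨Or.inr ha, Or.inr hl, Or.inl trivial⟩

theorem card_dncChildren_append (ha : a ∈ dncChildren w) :
    #(dncChildren (w ++ [a])) =
      succRule #(dncChildren w) #{b ∈ dncChildren w | dncKey w b < dncKey w a} := by
  rcases mem_dncChildren.1 ha with hnew | happ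
  · exact card_dncChildren_append_numBlocks_add_one hnew
  rcases Nat.lt_or_eq_of_le (dncKey_lt_of_appendable happ) with hlt | hlast
  · exact card_dncChildren_append_of_dncKey_add_one_lt happ hlt
  · exact card_dncChildren_append_of_dncKey_add_one_eq happ hlast

end Children

noncomputable def avoidTree : GeneratingTree ℕ succRule where
  Valid w := IsCanonicalWord w ∧ Avoids12312 w
  children := avoidChildren
  key _ := id
  valid_nil := ⟨isCanonicalWord_nil, avoids12312_nil⟩
  valid_append_iff := isCanonicalWord_and_avoids12312_append_iff
  key_injOn _ := Set.injOn_id _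
  card_children_append _ _ hw ha := card_avoidChildren_append hw.1 ha

noncomputable def dncTree : GeneratingTree ℕ succRule where
  Valid w := IsCanonicalWord w ∧ Is2DNC w
  children := dncChildren
  key := dncKey
  valid_nil := ⟨isCanonicalWord_nil, is2DNC_nil⟩
  valid_append_iff _ _ := isCanonicalWord_and_is2DNC_append_iff
  key_injOn _ := dncKey_injOn
  card_children_append _ _ _ ha := card_dncChildren_append ha

end CanonicalWord

/-- For every integer `n ≥ 0`, the number of 2-distant noncrossing partitions of `[n]`
equals the number of 12312-avoiding partitions of `[n]` (partitions being encoded by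
their canonical words). -/
theorem stmt9 (n : ℕ) :
    Nat.card {w : List ℕ // w.length = n ∧ IsCanonicalWord w ∧ Is2DNC w} =
    Nat.card {w : List ℕ // w.length = n ∧ IsCanonicalWord w ∧ Avoids12312 w} :=
  GeneratingTree.card_level_eq CanonicalWord.dncTree CanonicalWord.avoidTree
    (by simp [CanonicalWord.dncTree, CanonicalWord.avoidTree, CanonicalWord.dncChildren_nil,
      CanonicalWord.avoidChildren_nil]) n
end

section
/- For every integer n ≥ 2, the number of 12312-avoiding partitions of [n] equals 1 plus the sum over i = 2, …, n of the number of 12312-avoiding partitions of [i] in which 1 and 2 lie in different blocks. -/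
/-! Sort the 12312-avoiding partitions of `[n + 2]` by whether `1` and `2` share a block. If they
do, the canonical word starts with `1 1`, and deleting the second `1` is a bijection onto the
avoiding partitions of `[n + 1]`: canonicity is unaffected, and no occurrence of `12312` can use
two adjacent equal letters, since consecutive letters of the pattern differ. So the number `a n`
of avoiding partitions of `[n]` and the number `b n` of those separating `1` and `2` satisfy
`a (n + 2) = a (n + 1) + b (n + 2)`, which telescopes from `a 1 = 1`. -/

lemma prefMax_succ (w : List ℕ) (i : ℕ) :
    prefMax w (i + 1) = max (prefMax w i) (w.getD i 0) := by
  induction w generalizing i with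
  | nil => simp [prefMax]
  | cons a u ih =>
    cases i with
    | zero => simp [prefMax]
    | succ j => simp_all [prefMax, max_assoc]

lemma prefMax_cons_succ (a : ℕ) (u : List ℕ) (j : ℕ) :
    prefMax (a :: u) (j + 1) = max a (prefMax u j) := by
  simp [prefMax]

namespace IsCanonicalWord

variable {w : List ℕ}

lemma prefMax_le (hw : IsCanonicalWord w) (i : ℕ) : prefMax w i ≤ i := by
  induction i with
  | zero => simp [prefMax]
  | succ j ih =>
    rw [prefMax_succ]
    rcases lt_or_ge j w.length with hj | hj
    · exact max_le (ih.trans j.le_succ) ((hw j hj).2.trans (by omega))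
    · rw [List.getD_eq_default _ _ hj]; omega

lemma le_length (hw : IsCanonicalWord w) {x : ℕ} (hx : x ∈ w) : x ≤ w.length := by
  obtain ⟨i, hi, rfl⟩ := List.getElem_of_mem hx
  have := (hw i hi).2
  have := hw.prefMax_le i
  rw [List.getD_eq_getElem _ _ hi] at *
  omega

lemma head_eq_one {a : ℕ} {u : List ℕ} (hw : IsCanonicalWord (a :: u)) : a = 1 := by
  have := hw 0 (by simp)
  simp [prefMax] at this
  omega

end IsCanonicalWord

lemma finite_length_eq_forall_le (n m : ℕ) :
    {w : List ℕ | w.length = n ∧ ∀ x ∈ w, x ≤ m}.Finite := by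
  refine ((List.finite_length_eq (Fin (m + 1)) n).image (List.map Fin.val)).subset ?_
  rintro w ⟨hn, hm⟩
  refine ⟨w.map (Fin.ofNat (m + 1)), by simpa using hn, ?_⟩
  conv_rhs => rw [← w.map_id]
  rw [List.map_map]
  refine List.map_congr_left fun x hx => ?_
  simp [Nat.mod_eq_of_lt (Nat.lt_succ_of_le (hm x hx))]

lemma isCanonicalWord_cons_self_iff (a : ℕ) (u : List ℕ) :
    IsCanonicalWord (a :: a :: u) ↔ IsCanonicalWord (a :: u) := by
  constructor
  · intro h i hi
    cases i with
    | zero => exact h 0 (by simp)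
    | succ j =>
      have := h (j + 2) (by simpa using hi)
      simpa [prefMax_cons_succ] using this
  · intro h i hi
    match i with
    | 0 => exact h 0 (by simp)
    | 1 => have := h 0 (by simp); simp_all [prefMax]
    | j + 2 =>
      have := h (j + 1) (by simpa using hi)
      simpa [prefMax_cons_succ] using this

lemma getD_cons_self (a : ℕ) (u : List ℕ) (k : ℕ) :
    (a :: a :: u).getD k 0 = (a :: u).getD (k - 1) 0 := by
  cases k <;> simp

lemma avoids12312_cons_self_iff (a : ℕ) (u : List ℕ) :
    Avoids12312 (a :: a :: u) ↔ Avoids12312 (a :: u) := by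
  refine not_congr ⟨?_, ?_⟩
  · rintro ⟨i1, i2, i3, i4, i5, h12, h23, h34, h45, h5, e14, e25, l12, l23⟩
    have hi2 : 2 ≤ i2 := by
      by_contra!
      obtain rfl : i2 = 1 := by omega
      obtain rfl : i1 = 0 := by omega
      simp at l12
    simp only [getD_cons_self] at e14 e25 l12 l23
    exact ⟨i1 - 1, i2 - 1, i3 - 1, i4 - 1, i5 - 1, by omega, by omega, by omega, by omega,
      by simp at h5 ⊢; omega, e14, e25, l12, l23⟩
  · rintro ⟨i1, i2, i3, i4, i5, h12, h23, h34, h45, h5, e14, e25, l12, l23⟩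
    exact ⟨i1 + 1, i2 + 1, i3 + 1, i4 + 1, i5 + 1, by omega, by omega, by omega, by omega,
      by simpa using h5, e14, e25, l12, l23⟩

def avoidingWords (n : ℕ) : Set (List ℕ) :=
  {w | w.length = n ∧ IsCanonicalWord w ∧ Avoids12312 w}

def separatedAvoidingWords (n : ℕ) : Set (List ℕ) :=
  {w | w.length = n ∧ IsCanonicalWord w ∧ Avoids12312 w ∧ w.getD 0 0 ≠ w.getD 1 0}

lemma avoidingWords_finite (n : ℕ) : (avoidingWords n).Finite :=
  (finite_length_eq_forall_le n n).subset fun _ ⟨hn, hw, _⟩ =>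
    ⟨hn, fun _ hx => hn ▸ hw.le_length hx⟩

lemma avoidingWords_zero : avoidingWords 0 = {[]} := by
  ext w
  simp only [avoidingWords, Set.mem_ofPred_eq, Set.mem_singleton_iff, List.length_eq_zero_iff]
  constructor
  · exact fun h => h.1
  · rintro rfl
    exact ⟨rfl, fun i hi => by simp at hi, fun ⟨_, _, _, _, _, h⟩ => by simp at h⟩

lemma avoidingWords_one : avoidingWords 1 = {[1]} := by
  ext w
  simp only [avoidingWords, Set.mem_ofPred_eq, Set.mem_singleton_iff]
  constructor
  · rintro ⟨hn, hw, -⟩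
    obtain ⟨a, rfl⟩ := List.length_eq_one_iff.1 hn
    rw [hw.head_eq_one]
  · rintro rfl
    refine ⟨rfl, fun i hi => ?_, fun ⟨_, _, _, _, _, h⟩ => by simp at h; omega⟩
    obtain rfl : i = 0 := by simpa using hi
    simp [prefMax]

lemma avoidingWords_inter_getD_zero_eq_getD_one (n : ℕ) :
    avoidingWords (n + 2) ∩ {w | w.getD 0 0 = w.getD 1 0} =
      List.cons 1 '' avoidingWords (n + 1) := by
  ext w
  constructor
  · rintro ⟨⟨hn, hw, hav⟩, hsame⟩
    obtain _ | ⟨a, _ | ⟨b, u⟩⟩ := w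
    · simp at hn
    · simp at hn
    obtain rfl : b = a := by simpa using hsame.symm
    obtain rfl := hw.head_eq_one
    exact ⟨1 :: u, ⟨by simpa using hn, (isCanonicalWord_cons_self_iff 1 u).1 hw,
      (avoids12312_cons_self_iff 1 u).1 hav⟩, rfl⟩
  · rintro ⟨_ | ⟨a, u⟩, ⟨hn, hw, hav⟩, rfl⟩
    · simp at hn
    obtain rfl := hw.head_eq_one
    exact ⟨⟨by simpa using hn, (isCanonicalWord_cons_self_iff 1 u).2 hw,
      (avoids12312_cons_self_iff 1 u).2 hav⟩, rfl⟩

lemma avoidingWords_diff_getD_zero_eq_getD_one (n : ℕ) :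
    avoidingWords n \ {w | w.getD 0 0 = w.getD 1 0} = separatedAvoidingWords n := by
  ext w
  simp only [avoidingWords, separatedAvoidingWords, Set.mem_sdiff, Set.mem_ofPred_eq, and_assoc]

lemma ncard_avoidingWords_add_two (n : ℕ) :
    (avoidingWords (n + 2)).ncard =
      (avoidingWords (n + 1)).ncard + (separatedAvoidingWords (n + 2)).ncard := by
  rw [← Set.ncard_inter_add_ncard_sdiff_eq_ncard _ {w | w.getD 0 0 = w.getD 1 0}
      (avoidingWords_finite _), avoidingWords_inter_getD_zero_eq_getD_one,
    avoidingWords_diff_getD_zero_eq_getD_one, Set.ncard_image_of_injective _ List.cons_injective]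

theorem stmt15_general (n : ℕ) :
    Nat.card {w : List ℕ // w.length = n ∧ IsCanonicalWord w ∧ Avoids12312 w} =
    1 + ∑ i ∈ Finset.Icc 2 n,
      Nat.card {w : List ℕ // w.length = i ∧ IsCanonicalWord w ∧ Avoids12312 w ∧
        w.getD 0 0 ≠ w.getD 1 0} := by
  change (avoidingWords n).ncard = 1 + ∑ i ∈ Finset.Icc 2 n, (separatedAvoidingWords i).ncard
  obtain _ | n := n
  · simp [avoidingWords_zero]
  induction n with
  | zero => simp [avoidingWords_one]
  | succ n ih =>
    rw [Finset.sum_Icc_succ_top (by omega), ← add_assoc, ← ih, ncard_avoidingWords_add_two]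

/-- For every integer `n ≥ 2`, the number of 12312-avoiding partitions of `[n]` equals
`1` plus the sum over `i = 2, …, n` of the number of 12312-avoiding partitions of `[i]`
in which `1` and `2` lie in different blocks. -/
theorem stmt15 (n : ℕ) (hn : 2 ≤ n) :
    Nat.card {w : List ℕ // w.length = n ∧ IsCanonicalWord w ∧ Avoids12312 w} =
    1 + ∑ i ∈ Finset.Icc 2 n,
      Nat.card {w : List ℕ // w.length = i ∧ IsCanonicalWord w ∧ Avoids12312 w ∧
        w.getD 0 0 ≠ w.getD 1 0} :=
  stmt15_general n
end
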